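/- arXiv:2408.09155 — 6 statements merged into one kernel-verified Lean document; each statement's English description precedes it below -/
import Mathlib

section
/- Let T be an essentially bounded random variable on a probability space and let τ ∈ ℝ satisfy essInf T < τ ≤ E[T]. Then the set {γ ∈ (0,1] : sup_{α∈ℝ} (αγ − E[max(α − T, 0)]) ≥ τγ} has a minimum γ*, and γ* = inf_{c ≥ 0} E[max(0, c(τ − T) + 1)]. -/
/-!
Write `g(α) = E[(α - T)₊]` and `φ(c) = E[(c(τ - T) + 1)₊]`. Substituting `c = (α - τ)⁻¹` gives
`g(α) = (α - τ) φ((α - τ)⁻¹)` for `α > τ`, so `(α - τ)γ - g(α) = (α - τ)(γ - φ((α - τ)⁻¹))`,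
while for `α ≤ τ` this quantity stays below `-γ g(τ) < 0`. Hence the supremum
`sup_α ((α - τ)γ - g(α))` is negative, with a uniform margin, as soon as `γ < γ* = inf_c φ(c)`.
Conversely, if the supremum at `γ*` were negative, `φ(c)` would dominate both `γ* + mc` for some
`m > 0` and the linear bound `1 - c(E[T] - τ)`; the two lines force `γ* ≥ 1`, and at `γ = 1`
the value `α = ess sup T` already gives `E[T] - τ ≥ 0`.
-/

open MeasureTheory Set Filter

namespace BufferedProbability

variable {Ω : Type*} [MeasurableSpace Ω] {μ : Measure Ω} {T : Ω → ℝ} {τ α β γ c M : ℝ}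

noncomputable def shortfall (T : Ω → ℝ) (μ : Measure Ω) (α : ℝ) : ℝ :=
  ∫ ω, max (α - T ω) 0 ∂μ

noncomputable def bpoeObjective (T : Ω → ℝ) (μ : Measure Ω) (τ c : ℝ) : ℝ :=
  ∫ ω, max 0 (c * (τ - T ω) + 1) ∂μ

/-- The buffered probability that `T` falls below `τ`. -/
noncomputable def bpoe (T : Ω → ℝ) (μ : Measure Ω) (τ : ℝ) : ℝ :=
  ⨅ c : Ici (0 : ℝ), bpoeObjective T μ τ c

lemma exists_ae_le_of_memLp_top (hT : MemLp T ⊤ μ) : ∃ M, ∀ᵐ ω ∂μ, T ω ≤ M := by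
  obtain ⟨C, hC⟩ := eLpNormEssSup_lt_top_iff_isBoundedUnder.1 (by simpa using hT.eLpNorm_lt_top)
  refine ⟨C, ?_⟩
  filter_upwards [hC] with ω hω
  exact (le_abs_self _).trans (by simpa [← Real.norm_eq_abs] using NNReal.coe_le_coe.2 hω)

lemma measure_lt_pos_of_essInf_lt [NeZero μ] (hM : ∀ᵐ ω ∂μ, T ω ≤ M)
    (h : essInf T μ < α) : 0 < μ {ω | T ω < α} := by
  refine pos_iff_ne_zero.2 fun h0 => h.not_ge (le_essInf_of_ae_le α ?_ ?_)
  · show ∀ᵐ ω ∂μ, α ≤ T ω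
    simpa [ae_iff] using h0
  · exact IsBoundedUnder.isCoboundedUnder_ge ⟨M, hM⟩

section shortfall

lemma shortfall_nonneg : 0 ≤ shortfall T μ α :=
  integral_nonneg fun _ => le_max_right _ _

lemma integrable_max_sub_zero [IsFiniteMeasure μ] (hT : Integrable T μ) (α : ℝ) :
    Integrable (fun ω => max (α - T ω) 0) μ :=
  ((integrable_const α).sub hT).pos_part

lemma shortfall_mono [IsFiniteMeasure μ] (hT : Integrable T μ) : Monotone (shortfall T μ) := by
  intro _ _ hαβ
  exact integral_mono (integrable_max_sub_zero hT _) (integrable_max_sub_zero hT _) fun _ =>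
    max_le_max (by linarith) le_rfl

lemma shortfall_pos [IsFiniteMeasure μ] [NeZero μ] (hT : Integrable T μ)
    (hM : ∀ᵐ ω ∂μ, T ω ≤ M) (h : essInf T μ < α) : 0 < shortfall T μ α := by
  refine (integral_pos_iff_support_of_nonneg (fun _ => le_max_right _ _)
    (integrable_max_sub_zero hT α)).2 ((measure_lt_pos_of_essInf_lt hM h).trans_le ?_)
  exact measure_mono fun ω (hω : T ω < α) => (lt_max_of_lt_left (sub_pos.2 hω)).ne'

variable [IsProbabilityMeasure μ]

lemma integral_const_sub (hT : Integrable T μ) (α : ℝ) :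
    ∫ ω, (α - T ω) ∂μ = α - ∫ ω, T ω ∂μ := by
  simp [integral_sub (integrable_const α) hT]

lemma sub_integral_le_shortfall (hT : Integrable T μ) (α : ℝ) :
    α - ∫ ω, T ω ∂μ ≤ shortfall T μ α := by
  rw [← integral_const_sub hT]
  exact integral_mono ((integrable_const α).sub hT) (integrable_max_sub_zero hT α) fun _ =>
    le_max_left _ _

lemma shortfall_of_ae_le (hT : Integrable T μ) (hM : ∀ᵐ ω ∂μ, T ω ≤ M) :
    shortfall T μ M = M - ∫ ω, T ω ∂μ := by
  rw [shortfall, ← integral_const_sub hT]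
  refine integral_congr_ae ?_
  filter_upwards [hM] with ω hω
  exact max_eq_left (by linarith)

lemma shortfall_le_shortfall_add (hT : Integrable T μ) (hαβ : α ≤ β) :
    shortfall T μ β ≤ shortfall T μ α + (β - α) := by
  have hrhs : shortfall T μ α + (β - α) = ∫ ω, (max (α - T ω) 0 + (β - α)) ∂μ := by
    simp [shortfall, integral_add (integrable_max_sub_zero hT α) (integrable_const _)]
  rw [hrhs]
  refine integral_mono (integrable_max_sub_zero hT β)
    ((integrable_max_sub_zero hT α).add (integrable_const _)) fun ω => ?_
  exact max_le (by linarith [le_max_left (α - T ω) 0]) (by linarith [le_max_right (α - T ω) 0])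

lemma bddAbove_range_mul_sub_shortfall (hT : Integrable T μ) (hγ0 : 0 ≤ γ) (hγ1 : γ ≤ 1) :
    BddAbove (range fun α => α * γ - shortfall T μ α) := by
  refine ⟨max 0 (∫ ω, T ω ∂μ), ?_⟩
  rintro _ ⟨α, rfl⟩
  have := sub_integral_le_shortfall hT α
  rcases le_total 0 α with hα | hα
  · exact le_max_of_le_right (by nlinarith)
  · exact le_max_of_le_left (by nlinarith [shortfall_nonneg (T := T) (μ := μ) (α := α)])

end shortfall

lemma bpoeObjective_nonneg : 0 ≤ bpoeObjective T μ τ c :=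
  integral_nonneg fun _ => le_max_left _ _

lemma bpoeObjective_zero [IsProbabilityMeasure μ] : bpoeObjective T μ τ 0 = 1 := by
  simp [bpoeObjective]

lemma mul_sub_integral_add_one_le_bpoeObjective [IsProbabilityMeasure μ] (hT : Integrable T μ) :
    c * (τ - ∫ ω, T ω ∂μ) + 1 ≤ bpoeObjective T μ τ c := by
  have hmul : Integrable (fun ω => c * (τ - T ω)) μ := ((integrable_const τ).sub hT).const_mul c
  have hlin : Integrable (fun ω => c * (τ - T ω) + 1) μ := hmul.add (integrable_const 1)
  calc c * (τ - ∫ ω, T ω ∂μ) + 1 = ∫ ω, (c * (τ - T ω) + 1) ∂μ := by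
        rw [integral_add hmul (integrable_const 1)]
        simp [integral_const_mul, integral_const_sub hT]
    _ ≤ bpoeObjective T μ τ c :=
        integral_mono hlin (by simpa [max_comm] using hlin.pos_part) fun _ => le_max_right _ _

lemma bpoeObjective_eq_mul_shortfall (hc : 0 < c) :
    bpoeObjective T μ τ c = c * shortfall T μ (τ + c⁻¹) := by
  rw [bpoeObjective, shortfall, ← integral_const_mul]
  congr 1 with ω
  rw [mul_max_of_nonneg _ _ hc.le, mul_zero, max_comm]
  congr 1
  field_simp
  ring

lemma bpoe_le_bpoeObjective (hc : 0 ≤ c) : bpoe T μ τ ≤ bpoeObjective T μ τ c :=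
  ciInf_le ⟨0, by rintro _ ⟨c, rfl⟩; exact bpoeObjective_nonneg⟩ (⟨c, hc⟩ : Ici (0 : ℝ))

lemma bpoe_le_one [IsProbabilityMeasure μ] : bpoe T μ τ ≤ 1 :=
  (bpoe_le_bpoeObjective le_rfl).trans_eq bpoeObjective_zero

lemma mul_bpoe_le_shortfall (hα : τ < α) : (α - τ) * bpoe T μ τ ≤ shortfall T μ α := by
  have hpos : 0 < α - τ := sub_pos.2 hα
  have h := bpoe_le_bpoeObjective (T := T) (μ := μ) (τ := τ) (inv_pos.2 hpos).le
  rw [bpoeObjective_eq_mul_shortfall (inv_pos.2 hpos), inv_inv, add_sub_cancel] at h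
  calc (α - τ) * bpoe T μ τ ≤ (α - τ) * ((α - τ)⁻¹ * shortfall T μ α) :=
        mul_le_mul_of_nonneg_left h hpos.le
    _ = shortfall T μ α := by field_simp

/-- An affine lower bound `a + p c` of `φ(c)`, together with `φ(c) ≥ 1 - c (E[T] - τ)`,
bounds `γ*` from below by the height of the crossing point of the two lines. -/
lemma le_mul_bpoe_of_forall_le [IsProbabilityMeasure μ] (hT : Integrable T μ)
    (hτ : τ ≤ ∫ ω, T ω ∂μ) {a p : ℝ} (ha : a ≤ 1) (hp : 0 < p)
    (h : ∀ c, 0 < c → a + p * c ≤ bpoeObjective T μ τ c) :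
    (∫ ω, T ω ∂μ - τ) * a + p ≤ (p + (∫ ω, T ω ∂μ - τ)) * bpoe T μ τ := by
  set K := ∫ ω, T ω ∂μ - τ
  have hK : 0 ≤ K := sub_nonneg.2 hτ
  have hpK : 0 < p + K := by linarith
  rw [← div_le_iff₀' hpK]
  refine le_ciInf fun ⟨c, (hc : 0 ≤ c)⟩ => (div_le_iff₀' hpK).2 ?_
  rcases hc.eq_or_lt with rfl | hc
  · rw [bpoeObjective_zero]
    nlinarith
  · have hline := mul_sub_integral_add_one_le_bpoeObjective (τ := τ) (c := c) hT
    nlinarith [h c hc]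

lemma bpoe_pos [IsProbabilityMeasure μ] (hT : Integrable T μ) (hM : ∀ᵐ ω ∂μ, T ω ≤ M)
    (hτ1 : essInf T μ < τ) (hτ2 : τ ≤ ∫ ω, T ω ∂μ) : 0 < bpoe T μ τ := by
  have hg := shortfall_pos hT hM hτ1
  have h := le_mul_bpoe_of_forall_le hT hτ2 zero_le_one hg fun c hc => by
    rw [bpoeObjective_eq_mul_shortfall hc, zero_add, mul_comm]
    exact mul_le_mul_of_nonneg_left (shortfall_mono hT (by simpa using hc.le)) hc.le
  nlinarith [sub_nonneg.2 hτ2]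

lemma mul_bpoe_le_ciSup [IsProbabilityMeasure μ] (hT : Integrable T μ)
    (hM : ∀ᵐ ω ∂μ, T ω ≤ M) (hτ : τ ≤ ∫ ω, T ω ∂μ) :
    τ * bpoe T μ τ ≤ ⨆ α, (α * bpoe T μ τ - shortfall T μ α) := by
  set b := bpoe T μ τ
  have hb0 : 0 ≤ b := Real.iInf_nonneg fun _ => bpoeObjective_nonneg
  have hbdd := bddAbove_range_mul_sub_shortfall hT hb0 bpoe_le_one
  by_contra! hlt
  set m := τ * b - ⨆ α, (α * b - shortfall T μ α)
  have hm : 0 < m := sub_pos.2 hlt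
  have hline : ∀ c, 0 < c → b + m * c ≤ bpoeObjective T μ τ c := fun c hc => by
    have hsup := le_ciSup hbdd (τ + c⁻¹)
    have hid := bpoeObjective_eq_mul_shortfall (T := T) (μ := μ) (τ := τ) hc
    have : c * ((τ + c⁻¹) * b - shortfall T μ (τ + c⁻¹))
        = c * τ * b + b - bpoeObjective T μ τ c := by
      rw [hid]
      field_simp
    nlinarith [mul_le_mul_of_nonneg_left hsup hc.le]
  have hb1 : b = 1 := by
    have := le_mul_bpoe_of_forall_le hT hτ bpoe_le_one hm hline
    nlinarith [bpoe_le_one (T := T) (μ := μ) (τ := τ)]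
  have hsup := le_ciSup hbdd M
  simp only [hb1, shortfall_of_ae_le hT hM] at hsup hlt
  linarith

lemma mul_sub_shortfall_le_of_le [IsProbabilityMeasure μ] (hT : Integrable T μ) (hγ0 : 0 ≤ γ)
    (hγ1 : γ ≤ 1) (hα : α ≤ τ) :
    α * γ - shortfall T μ α ≤ τ * γ - γ * shortfall T μ τ := by
  have h := shortfall_le_shortfall_add hT hα
  nlinarith [shortfall_nonneg (T := T) (μ := μ) (α := α)]

lemma mul_sub_shortfall_le_of_lt [IsProbabilityMeasure μ] (hT : Integrable T μ) (hγ0 : 0 ≤ γ)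
    (hγ : γ < bpoe T μ τ) (hα : τ < α) :
    α * γ - shortfall T μ α ≤ τ * γ - (bpoe T μ τ - γ) / bpoe T μ τ * shortfall T μ τ := by
  set b := bpoe T μ τ
  have hb : 0 < b := hγ0.trans_lt hγ
  have h1 := mul_bpoe_le_shortfall (T := T) (μ := μ) hα
  have h2 := shortfall_mono hT hα.le
  rw [div_mul_eq_mul_div, ← sub_nonneg, ← mul_le_mul_iff_right₀ hb, mul_zero]
  -- the bounds `-(α - τ)(b - γ)` and `(α - τ)γ - g(τ)` combined with weights `γ` and `b - γ`
  have : b * (τ * γ - (b - γ) * shortfall T μ τ / b - (α * γ - shortfall T μ α))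
      = b * (τ * γ - (α * γ - shortfall T μ α)) - (b - γ) * shortfall T μ τ := by
    field_simp
    ring
  rw [this]
  nlinarith [mul_le_mul_of_nonneg_left h1 hγ0, mul_le_mul_of_nonneg_left h2 (sub_nonneg.2 hγ.le)]

lemma ciSup_lt_of_lt_bpoe [IsProbabilityMeasure μ] (hT : Integrable T μ)
    (hM : ∀ᵐ ω ∂μ, T ω ≤ M) (hτ : essInf T μ < τ) (hγ0 : 0 < γ) (hγ1 : γ ≤ 1)
    (hγ : γ < bpoe T μ τ) :
    ⨆ α, (α * γ - shortfall T μ α) < τ * γ := by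
  have hg := shortfall_pos hT hM hτ
  set g := shortfall T μ τ
  set m := min (γ * g) ((bpoe T μ τ - γ) / bpoe T μ τ * g)
  have hm : 0 < m :=
    lt_min (by positivity) (mul_pos (div_pos (sub_pos.2 hγ) (hγ0.trans hγ)) hg)
  refine (ciSup_le fun α => ?_).trans_lt (sub_lt_self _ hm)
  rcases le_or_gt α τ with hα | hα
  · exact (mul_sub_shortfall_le_of_le hT hγ0.le hγ1 hα).trans
      (by linarith [min_le_left (γ * g) ((bpoe T μ τ - γ) / bpoe T μ τ * g)])
  · exact (mul_sub_shortfall_le_of_lt hT hγ0.le hγ hα).trans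
      (by linarith [min_le_right (γ * g) ((bpoe T μ τ - γ) / bpoe T μ τ * g)])

end BufferedProbability

open BufferedProbability in
theorem stmt_0_general {Ω : Type*} [MeasureSpace Ω] [IsProbabilityMeasure (volume : Measure Ω)]
    (T : Ω → ℝ) (hTbdd : MemLp T ⊤ volume) (τ : ℝ)
    (hτ1 : essInf T volume < τ) (hτ2 : τ ≤ ∫ ω, T ω) :
    ∃ γstar : ℝ,
      IsLeast {γ : ℝ | γ ∈ Set.Ioc (0 : ℝ) 1 ∧
          τ * γ ≤ ⨆ α : ℝ, (α * γ - ∫ ω, max (α - T ω) 0)} γstar ∧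
      γstar = ⨅ c : Set.Ici (0 : ℝ), ∫ ω, max 0 ((c : ℝ) * (τ - T ω) + 1) := by
  have hT : Integrable T volume := hTbdd.integrable le_top
  obtain ⟨M, hM⟩ := exists_ae_le_of_memLp_top hTbdd
  refine ⟨bpoe T volume τ, ⟨⟨⟨bpoe_pos hT hM hτ1 hτ2, bpoe_le_one⟩,
    mul_bpoe_le_ciSup hT hM hτ2⟩, ?_⟩, rfl⟩
  rintro γ ⟨⟨hγ0, hγ1⟩, hγ⟩
  by_contra! hlt
  exact (ciSup_lt_of_lt_bpoe hT hM hτ1 hγ0 hγ1 hlt).not_ge hγ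

/-- Lemma 1 of the paper. For an essentially bounded random variable `T`
and `τ` with `essInf T < τ ≤ E[T]`, the set of `γ ∈ (0,1]` such that
`sup_α (αγ - E[(α - T)₊]) ≥ τγ` has a least element `γ*`, and
`γ* = inf_{c ≥ 0} E[max 0 (c(τ - T) + 1)]`. -/
theorem stmt_0 {Ω : Type*} [MeasureSpace Ω] [IsProbabilityMeasure (volume : Measure Ω)]
    (T : Ω → ℝ) (hTmeas : Measurable T) (hTbdd : MemLp T ⊤ volume) (τ : ℝ)
    (hτ1 : essInf T volume < τ) (hτ2 : τ ≤ ∫ ω, T ω) :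
    ∃ γstar : ℝ,
      IsLeast {γ : ℝ | γ ∈ Set.Ioc (0 : ℝ) 1 ∧
          τ * γ ≤ ⨆ α : ℝ, (α * γ - ∫ ω, max (α - T ω) 0)} γstar ∧
      γstar = ⨅ c : Set.Ici (0 : ℝ), ∫ ω, max 0 ((c : ℝ) * (τ - T ω) + 1) :=
  stmt_0_general T hTbdd τ hτ1 hτ2
end

section
/- Let T be an integrable random variable on a probability space whose law is atomless, and let γ ∈ (0,1). Define the right γ-quantile Q_γ = inf{α ∈ ℝ : P(T ≤ α) > γ}. Then E[T · 1{T ≤ Q_γ}] = sup_{α∈ℝ} (αγ − E[max(α − T, 0)]). -/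
open MeasureTheory

/-- For an integrable random variable `T` with atomless law and `γ ∈ (0,1)`,
with right `γ`-quantile `Q_γ = inf {α | P(T ≤ α) > γ}`, one has
`E[T · 1{T ≤ Q_γ}] = sup_α (αγ - E[(α - T)₊])`. -/
theorem stmt_1 {Ω : Type*} [MeasureSpace Ω] [IsProbabilityMeasure (volume : Measure Ω)]
    (T : Ω → ℝ) (hTmeas : Measurable T) (hTint : Integrable T)
    (hatomless : ∀ x : ℝ, volume {ω | T ω = x} = 0)
    (γ : ℝ) (hγ : γ ∈ Set.Ioo (0 : ℝ) 1) :
    ∫ ω, T ω * (if T ω ≤ sInf {α : ℝ | γ < (volume {ω' | T ω' ≤ α}).toReal} then (1 : ℝ) else 0)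
      = ⨆ α : ℝ, (α * γ - ∫ ω, max (α - T ω) 0) := by
  obtain ⟨hγ0, hγ1⟩ := hγ
  set μ := (volume : Measure Ω) with hμ
  have hms : ∀ c : ℝ, MeasurableSet {ω | T ω ≤ c} := fun c => hTmeas measurableSet_Iic
  have hfin : ∀ c : ℝ, μ {ω | T ω ≤ c} ≠ ⊤ := fun c => measure_ne_top μ _
  set F : ℝ → ℝ := fun c => (μ {ω | T ω ≤ c}).toReal with hF
  set S : Set ℝ := {α : ℝ | γ < F α} with hS
  set Q : ℝ := sInf S with hQdef
  have hFmono : Monotone F := fun a b hab =>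
    ENNReal.toReal_mono (hfin b) (measure_mono fun ω h => le_trans h hab)
  -- S nonempty
  have hSne : S.Nonempty := by
    have hmono : Monotone (fun n : ℕ => {ω | T ω ≤ (n : ℝ)}) := by
      intro a b hab ω h
      simp only [Set.mem_setOf_eq] at h ⊢
      have : (a:ℝ) ≤ (b:ℝ) := by exact_mod_cast hab
      linarith
    have hu : (⋃ n : ℕ, {ω | T ω ≤ (n : ℝ)}) = Set.univ := by
      ext ω
      simp only [Set.mem_iUnion, Set.mem_setOf_eq, Set.mem_univ, iff_true]
      exact exists_nat_ge (T ω)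
    have ht := tendsto_measure_iUnion_atTop (μ := μ) hmono
    rw [hu, measure_univ] at ht
    have hlt : ENNReal.ofReal γ < 1 := by
      rw [show (1 : ENNReal) = ENNReal.ofReal 1 by simp]
      exact ENNReal.ofReal_lt_ofReal_iff_of_nonneg hγ0.le |>.2 hγ1
    obtain ⟨n, hn⟩ := (ht.eventually_const_lt hlt).exists
    refine ⟨(n : ℝ), ?_⟩
    have := (ENNReal.ofReal_le_iff_le_toReal (hfin n)).1 hn.le
    simp only [hS, Set.mem_setOf_eq]
    rcases lt_or_eq_of_le this with h | h
    · exact h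
    · -- need strict; redo: γ < toReal from ofReal γ < μ
      have h2 : ENNReal.ofReal γ ≠ μ {ω | T ω ≤ (n:ℝ)} := hn.ne
      exact lt_of_le_of_ne this (by
        intro hEq
        exact h2 (by rw [hEq, ENNReal.ofReal_toReal (hfin n)]))
  -- S bounded below
  have hSbdd : BddBelow S := by
    have hanti : Antitone (fun n : ℕ => {ω | T ω ≤ -(n : ℝ)}) := by
      intro a b hab ω h
      simp only [Set.mem_setOf_eq] at h ⊢
      have : (a:ℝ) ≤ (b:ℝ) := by exact_mod_cast hab
      linarith
    have hi : (⋂ n : ℕ, {ω | T ω ≤ -(n : ℝ)}) = ∅ := by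
      ext ω
      simp only [Set.mem_iInter, Set.mem_setOf_eq, Set.mem_empty_iff_false, iff_false, not_forall]
      obtain ⟨n, hn⟩ := exists_nat_gt (-T ω)
      exact ⟨n, by push_neg; linarith⟩
    have ht := tendsto_measure_iInter_atTop (μ := μ)
      (fun n => (hms _).nullMeasurableSet) hanti ⟨0, hfin _⟩
    rw [hi, measure_empty] at ht
    have := ht.eventually_lt_const (by positivity : (0:ENNReal) < ENNReal.ofReal γ)
    obtain ⟨n, hn⟩ := this.exists
    refine ⟨-(n : ℝ), fun x hx => ?_⟩
    by_contra hlt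
    push_neg at hlt
    have : F x ≤ F (-(n:ℝ)) := hFmono hlt.le
    have hFn : F (-(n:ℝ)) ≤ γ :=
      ((ENNReal.le_ofReal_iff_toReal_le (hfin _) hγ0.le).1 hn.le)
    exact absurd (lt_of_lt_of_le hx this) (not_lt.2 hFn)
  have hnotin : ∀ β : ℝ, β < Q → F β ≤ γ := by
    intro β hβ
    by_contra h
    push_neg at h
    exact absurd (csInf_le hSbdd h) (not_le.2 hβ)
  have hgtQ : ∀ β : ℝ, Q < β → γ < F β := by
    intro β hβ
    obtain ⟨x, hxS, hxβ⟩ := exists_lt_of_csInf_lt hSne hβ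
    exact lt_of_lt_of_le hxS (hFmono hxβ.le)
  -- F Q = γ
  have hμQ : μ {ω | T ω ≤ Q} = ENNReal.ofReal γ := by
    refine le_antisymm ?_ ?_
    · -- upper bound via {T < Q}
      have h1 : {ω | T ω ≤ Q} ⊆ {ω | T ω < Q} ∪ {ω | T ω = Q} := by
        intro ω h
        simp only [Set.mem_setOf_eq, Set.mem_union]
        exact lt_or_eq_of_le h
      refine (measure_mono h1).trans ?_
      refine (measure_union_le _ _).trans ?_
      rw [hatomless Q, add_zero]
      have h2 : {ω | T ω < Q} = ⋃ n : ℕ, {ω | T ω ≤ Q - 1 / ((n:ℝ) + 1)} := by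
        ext ω
        simp only [Set.mem_setOf_eq, Set.mem_iUnion]
        constructor
        · intro h
          obtain ⟨n, hn⟩ := exists_nat_one_div_lt (by linarith : (0:ℝ) < Q - T ω)
          exact ⟨n, by linarith⟩
        · rintro ⟨n, hn⟩
          have : (0:ℝ) < 1 / ((n:ℝ) + 1) := by positivity
          linarith
      rw [h2]
      have hmono : Monotone (fun n : ℕ => {ω | T ω ≤ Q - 1 / ((n:ℝ) + 1)}) := by
        intro a b hab ω h
        simp only [Set.mem_setOf_eq] at h ⊢
        have : 1 / ((b:ℝ) + 1) ≤ 1 / ((a:ℝ) + 1) := by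
          apply one_div_le_one_div_of_le (by positivity)
          exact_mod_cast by omega
        linarith
      rw [hmono.measure_iUnion]
      refine iSup_le fun n => ?_
      refine (ENNReal.le_ofReal_iff_toReal_le (hfin _) hγ0.le).2 ?_
      refine hnotin _ ?_
      have : (0:ℝ) < 1 / ((n:ℝ) + 1) := by positivity
      linarith
    · -- lower bound via ⋂ {T ≤ Q + 1/(n+1)}
      have h2 : {ω | T ω ≤ Q} = ⋂ n : ℕ, {ω | T ω ≤ Q + 1 / ((n:ℝ) + 1)} := by
        ext ω
        simp only [Set.mem_setOf_eq, Set.mem_iInter]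
        constructor
        · intro h n
          have : (0:ℝ) < 1 / ((n:ℝ) + 1) := by positivity
          linarith
        · intro h
          by_contra hc
          push_neg at hc
          obtain ⟨n, hn⟩ := exists_nat_one_div_lt (by linarith : (0:ℝ) < T ω - Q)
          have := h n
          linarith
      rw [h2]
      have hanti : Antitone (fun n : ℕ => {ω | T ω ≤ Q + 1 / ((n:ℝ) + 1)}) := by
        intro a b hab ω h
        simp only [Set.mem_setOf_eq] at h ⊢
        have : 1 / ((b:ℝ) + 1) ≤ 1 / ((a:ℝ) + 1) := by
          apply one_div_le_one_div_of_le (by positivity)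
          exact_mod_cast by omega
        linarith
      rw [hanti.measure_iInter (fun n => (hms _).nullMeasurableSet) ⟨0, hfin _⟩]
      refine le_iInf fun n => ?_
      refine (ENNReal.ofReal_le_iff_le_toReal (hfin _)).2 ?_
      refine (hgtQ _ ?_).le
      have : (0:ℝ) < 1 / ((n:ℝ) + 1) := by positivity
      linarith
  have hFQ : F Q = γ := by
    rw [hF]; simp only
    rw [hμQ, ENNReal.toReal_ofReal hγ0.le]
  -- integrability and integral of indicators
  have hind_eq : ∀ c : ℝ, (fun ω => if T ω ≤ c then (1:ℝ) else 0)
      = Set.indicator {ω | T ω ≤ c} (fun _ => (1:ℝ)) := by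
    intro c; funext ω; simp [Set.indicator_apply, Set.mem_setOf_eq]
  have hind_int : ∀ c : ℝ, Integrable (fun ω => if T ω ≤ c then (1:ℝ) else 0) μ := by
    intro c; rw [hind_eq c]
    exact (integrable_const 1).indicator (hms c)
  have hind_integral : ∀ c : ℝ, ∫ ω, (if T ω ≤ c then (1:ℝ) else 0) ∂μ = F c := by
    intro c
    rw [hind_eq c]
    exact integral_indicator_one (hms c)
  have hpos_int : ∀ α : ℝ, Integrable (fun ω => max (α - T ω) 0) μ :=
    fun α => ((integrable_const α).sub hTint).pos_part
  -- sandwich inequalities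
  have hsandwich : ∀ a b : ℝ, b ≤ a →
      (a - b) * F b ≤ (∫ ω, max (a - T ω) 0 ∂μ) - (∫ ω, max (b - T ω) 0 ∂μ) ∧
      (∫ ω, max (a - T ω) 0 ∂μ) - (∫ ω, max (b - T ω) 0 ∂μ) ≤ (a - b) * F a := by
    intro a b hba
    have hdiff_int : Integrable (fun ω => max (a - T ω) 0 - max (b - T ω) 0) μ :=
      (hpos_int a).sub (hpos_int b)
    have hsub : (∫ ω, (max (a - T ω) 0 - max (b - T ω) 0) ∂μ)
        = (∫ ω, max (a - T ω) 0 ∂μ) - (∫ ω, max (b - T ω) 0 ∂μ) :=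
      integral_sub (hpos_int a) (hpos_int b)
    constructor
    · have hpt : ∀ ω, (a - b) * (if T ω ≤ b then (1:ℝ) else 0)
          ≤ max (a - T ω) 0 - max (b - T ω) 0 := by
        intro ω
        rcases le_or_gt (T ω) b with h | h
        · rw [if_pos h, max_eq_left (by linarith), max_eq_left (by linarith)]
          ring_nf; linarith
        · rw [if_neg (not_le.2 h), mul_zero]
          have hb0 : max (b - T ω) 0 = 0 := max_eq_right (by linarith)
          have := le_max_right (a - T ω) 0
          rw [hb0]
          linarith
      calc (a - b) * F b = ∫ ω, (a - b) * (if T ω ≤ b then (1:ℝ) else 0) ∂μ := by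
            rw [integral_const_mul, hind_integral]
        _ ≤ ∫ ω, (max (a - T ω) 0 - max (b - T ω) 0) ∂μ :=
            integral_mono ((hind_int b).const_mul _) hdiff_int hpt
        _ = _ := hsub
    · have hpt : ∀ ω, max (a - T ω) 0 - max (b - T ω) 0
          ≤ (a - b) * (if T ω ≤ a then (1:ℝ) else 0) := by
        intro ω
        rcases le_or_gt (T ω) a with h | h
        · rw [if_pos h, mul_one]
          rcases le_or_gt (T ω) b with h2 | h2
          · rw [max_eq_left (by linarith), max_eq_left (by linarith)]; linarith
          · rw [max_eq_left (by linarith), max_eq_right (by linarith)]; linarith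
        · rw [if_neg (not_le.2 h), mul_zero]
          have ha0 : max (a - T ω) 0 = 0 := max_eq_right (by linarith)
          have hb0 : max (b - T ω) 0 = 0 := max_eq_right (by linarith)
          rw [ha0, hb0]
          linarith
      calc (∫ ω, max (a - T ω) 0 ∂μ) - (∫ ω, max (b - T ω) 0 ∂μ)
            = ∫ ω, (max (a - T ω) 0 - max (b - T ω) 0) ∂μ := hsub.symm
        _ ≤ ∫ ω, (a - b) * (if T ω ≤ a then (1:ℝ) else 0) ∂μ :=
            integral_mono hdiff_int ((hind_int a).const_mul _) hpt
        _ = (a - b) * F a := by rw [integral_const_mul, hind_integral]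
  -- main bound
  set g : ℝ → ℝ := fun α => α * γ - ∫ ω, max (α - T ω) 0 with hg
  have hbound : ∀ α : ℝ, g α ≤ g Q := by
    intro α
    rcases le_total α Q with h | h
    · have := (hsandwich Q α h).2
      rw [hFQ] at this
      simp only [hg]
      have hμeq : (∫ ω, max (Q - T ω) 0 ∂μ) - (∫ ω, max (α - T ω) 0 ∂μ) ≤ (Q - α) * γ := this
      nlinarith
    · have := (hsandwich α Q h).1
      rw [hFQ] at this
      simp only [hg]
      nlinarith
  have hsup : (⨆ α : ℝ, g α) = g Q :=
    le_antisymm (ciSup_le hbound)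
      (le_ciSup ⟨g Q, Set.forall_mem_range.2 hbound⟩ Q)
  -- compute g Q
  have hTind_int : Integrable (fun ω => T ω * (if T ω ≤ Q then (1:ℝ) else 0)) μ := by
    have : (fun ω => T ω * (if T ω ≤ Q then (1:ℝ) else 0))
        = Set.indicator {ω | T ω ≤ Q} T := by
      funext ω; simp [Set.indicator_apply, Set.mem_setOf_eq, mul_ite]
    rw [this]
    exact hTint.indicator (hms Q)
  have hmaxQ : (∫ ω, max (Q - T ω) 0 ∂μ)
      = Q * γ - ∫ ω, T ω * (if T ω ≤ Q then (1:ℝ) else 0) ∂μ := by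
    have hpt : (fun ω => max (Q - T ω) 0)
        = fun ω => Q * (if T ω ≤ Q then (1:ℝ) else 0)
            - T ω * (if T ω ≤ Q then (1:ℝ) else 0) := by
      funext ω
      rcases le_or_gt (T ω) Q with h | h
      · rw [if_pos h, max_eq_left (by linarith)]; ring
      · rw [if_neg (not_le.2 h), max_eq_right (by linarith)]; ring
    rw [hpt, integral_sub ((hind_int Q).const_mul Q) hTind_int,
      integral_const_mul, hind_integral, hFQ]
  rw [hsup]
  simp only [hg]
  rw [show (∫ ω, max (Q - T ω) 0) = (∫ ω, max (Q - T ω) 0 ∂μ) from rfl, hmaxQ]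
  ring
end

section
/- Let T be an essentially bounded random variable whose law is atomless. Define g : (0,1) → ℝ by g(γ) = sup_{α∈ℝ} (α − γ⁻¹ E[max(α − T, 0)]). Then g is continuous and strictly increasing on (0,1), lim_{γ→0⁺} g(γ) = essInf T, and lim_{γ→1⁻} g(γ) = E[T]. In particular the range of g on (0,1) is the open interval (essInf T, E[T]). -/
/-!
Write `φ(α) = E[(α - T)₊]` and `G(y) = sup_α (α - y φ(α))`, so that `g(γ) = G(1/γ)`. The function
`φ` is continuous and nondecreasing, vanishes up to `m = essInf T`, equals `α - E[T]` from
`M = essSup T` on, and satisfies `α - φ(α) ≤ E[T]`. Hence for `y ≥ 1` the supremum is attained on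
`[m, M]`, where `0 ≤ φ ≤ M - E[T]`, so `G` is Lipschitz there (a supremum of affine functions of
`y` with bounded slopes) and `G(1) = E[T]`. Atomlessness gives `P(T ≤ α) → 0` as `α ↓ m`, so
`φ(α) = o(α - m)` and for `y > 1` the maximiser lies strictly above `m`, where `φ > 0`: this makes
`G` strictly decreasing. Since `φ` grows at least linearly to the right of `m + ε`, `G(y) → m` as
`y → ∞`.
-/

open MeasureTheory Filter Set Topology ProbabilityTheory

lemma StrictMonoOn.image_Ioo_eq_of_tendsto {α β : Type*} [ConditionallyCompleteLinearOrder α]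
    [TopologicalSpace α] [OrderTopology α] [DenselyOrdered α] [LinearOrder β]
    [TopologicalSpace β] [OrderTopology β] {f : α → β} {a b : α} {la lb : β}
    (hab : a < b) (hf : StrictMonoOn f (Ioo a b)) (hc : ContinuousOn f (Ioo a b))
    (ha : Tendsto f (𝓝[>] a) (𝓝 la)) (hb : Tendsto f (𝓝[<] b) (𝓝 lb)) :
    f '' Ioo a b = Ioo la lb := by
  have : (𝓝[>] a).NeBot := nhdsGT_neBot_of_exists_gt ⟨b, hab⟩
  have : (𝓝[<] b).NeBot := nhdsLT_neBot_of_exists_lt ⟨a, hab⟩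
  refine Subset.antisymm ?_ fun c hc' => ?_
  · rintro _ ⟨x, hx, rfl⟩
    obtain ⟨x₁, hax₁, hx₁x⟩ := exists_between hx.1
    obtain ⟨x₂, hxx₂, hx₂b⟩ := exists_between hx.2
    have hx₁ : x₁ ∈ Ioo a b := ⟨hax₁, hx₁x.trans hx.2⟩
    have hx₂ : x₂ ∈ Ioo a b := ⟨hx.1.trans hxx₂, hx₂b⟩
    refine ⟨(le_of_tendsto ha ?_).trans_lt (hf hx₁ hx hx₁x),
      (hf hx hx₂ hxx₂).trans_le (ge_of_tendsto hb ?_)⟩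
    · filter_upwards [Ioo_mem_nhdsGT hax₁] with z hz
      exact (hf ⟨hz.1, hz.2.trans hx₁.2⟩ hx₁ hz.2).le
    · filter_upwards [Ioo_mem_nhdsLT hx₂b] with z hz
      exact (hf hx₂ ⟨hx₂.1.trans hz.1, hz.2⟩ hz.1).le
  · obtain ⟨x₁, hx₁c, hx₁⟩ :=
      ((ha.eventually (gt_mem_nhds hc'.1)).and (Ioo_mem_nhdsGT hab)).exists
    obtain ⟨x₂, hcx₂, hx₂⟩ :=
      ((hb.eventually (lt_mem_nhds hc'.2)).and (Ioo_mem_nhdsLT hab)).exists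
    have hsub : Icc x₁ x₂ ⊆ Ioo a b := Icc_subset_Ioo hx₁.1 hx₂.2
    obtain ⟨x, hx, rfl⟩ := intermediate_value_Ioo ((hf.lt_iff_lt hx₁ hx₂).1 (hx₁c.trans hcx₂)).le
      (hc.mono hsub) ⟨hx₁c, hcx₂⟩
    exact ⟨x, hsub (Ioo_subset_Icc_self hx), rfl⟩

lemma tendsto_inv_nhdsLT_one : Tendsto (fun x : ℝ => x⁻¹) (𝓝[<] 1) (𝓝[>] 1) := by
  refine tendsto_nhdsWithin_iff.2 ⟨?_, ?_⟩
  · simpa using (continuousAt_inv₀ (one_ne_zero (α := ℝ))).tendsto.mono_left nhdsWithin_le_nhds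
  · filter_upwards [Ioo_mem_nhdsLT zero_lt_one] with x hx
    exact (one_lt_inv₀ hx.1).2 hx.2

lemma mapsTo_inv_Ioo_zero_one : MapsTo (fun x : ℝ => x⁻¹) (Ioo 0 1) (Ioi 1) :=
  fun _ hx => (one_lt_inv₀ hx.1).2 hx.2

lemma MeasureTheory.MemLp.isBoundedUnder_abs_top {Ω : Type*} [MeasurableSpace Ω] {μ : Measure Ω}
    {T : Ω → ℝ} (hT : MemLp T ⊤ μ) :
    IsBoundedUnder (· ≤ ·) (ae μ) fun ω => |T ω| := by
  have h := hT.eLpNorm_lt_top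
  rw [eLpNorm_exponent_top] at h
  obtain ⟨C, hC⟩ := eLpNormEssSup_lt_top_iff_isBoundedUnder.1 h
  exact isBoundedUnder_of_eventually_le (a := (C : ℝ)) <| (eventually_map.1 hC).mono
    fun ω hω => by simpa [← Real.norm_eq_abs, ← coe_nnnorm] using hω

noncomputable def lowerPartialMoment {Ω : Type*} [MeasurableSpace Ω] (μ : Measure Ω)
    (T : Ω → ℝ) (α : ℝ) : ℝ :=
  ∫ ω, max (α - T ω) 0 ∂μ

section LowerPartialMoment

variable {Ω : Type*} [MeasurableSpace Ω] {μ : Measure Ω} {T : Ω → ℝ} {α m : ℝ}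

lemma integrable_max_sub_zero [IsFiniteMeasure μ] (hT : Integrable T μ) (α : ℝ) :
    Integrable (fun ω => max (α - T ω) 0) μ :=
  ((integrable_const α).sub hT).pos_part

lemma lowerPartialMoment_nonneg (α : ℝ) : 0 ≤ lowerPartialMoment μ T α :=
  integral_nonneg fun _ => le_max_right _ _

lemma lowerPartialMoment_mono [IsFiniteMeasure μ] (hT : Integrable T μ) :
    Monotone (lowerPartialMoment μ T) := fun _ _ hab =>
  integral_mono (integrable_max_sub_zero hT _) (integrable_max_sub_zero hT _) fun _ =>
    max_le_max_right 0 (sub_le_sub_right hab _)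

lemma lipschitzWith_lowerPartialMoment [IsProbabilityMeasure μ] (hT : Integrable T μ) :
    LipschitzWith 1 (lowerPartialMoment μ T) := by
  refine LipschitzWith.of_le_add fun a b => ?_
  calc lowerPartialMoment μ T a ≤ ∫ ω, (max (b - T ω) 0 + dist a b) ∂μ := by
        refine integral_mono (integrable_max_sub_zero hT a)
          ((integrable_max_sub_zero hT b).add (integrable_const _)) fun ω => ?_
        rw [Real.dist_eq]
        exact max_le (by linarith [le_max_left (b - T ω) 0, le_abs_self (a - b)])
          (add_nonneg (le_max_right _ _) (abs_nonneg _))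
    _ = lowerPartialMoment μ T b + dist a b := by
        rw [integral_add (integrable_max_sub_zero hT b) (integrable_const _)]
        simp [lowerPartialMoment]

lemma lowerPartialMoment_eq_zero (h : ∀ᵐ ω ∂μ, α ≤ T ω) : lowerPartialMoment μ T α = 0 :=
  integral_eq_zero_of_ae <| h.mono fun _ hω => max_eq_right (sub_nonpos.2 hω)

lemma sub_lowerPartialMoment_le_integral [IsProbabilityMeasure μ] (hT : Integrable T μ)
    (α : ℝ) : α - lowerPartialMoment μ T α ≤ ∫ ω, T ω ∂μ := by
  have h : α - lowerPartialMoment μ T α = ∫ ω, (α - max (α - T ω) 0) ∂μ := by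
    rw [integral_sub (integrable_const α) (integrable_max_sub_zero hT α)]
    simp [lowerPartialMoment]
  rw [h]
  refine integral_mono ((integrable_const α).sub (integrable_max_sub_zero hT α)) hT fun ω => ?_
  simp only
  linarith [le_max_left (α - T ω) 0]

lemma lowerPartialMoment_eq_sub_integral [IsProbabilityMeasure μ] (hT : Integrable T μ)
    (h : ∀ᵐ ω ∂μ, T ω ≤ α) : lowerPartialMoment μ T α = α - ∫ ω, T ω ∂μ := by
  rw [lowerPartialMoment, integral_congr_ae (h.mono fun ω hω => max_eq_left (sub_nonneg.2 hω)),
    integral_sub (integrable_const α) hT]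
  simp

lemma sub_mul_measureReal_le_lowerPartialMoment [IsFiniteMeasure μ] (hTm : Measurable T)
    (hT : Integrable T μ) (α c : ℝ) :
    (α - c) * μ.real {ω | T ω ≤ c} ≤ lowerPartialMoment μ T α := by
  have hs : MeasurableSet {ω | T ω ≤ c} := hTm measurableSet_Iic
  calc (α - c) * μ.real {ω | T ω ≤ c} = ∫ ω, {ω | T ω ≤ c}.indicator (fun _ => α - c) ω ∂μ := by
        rw [integral_indicator_const _ hs, smul_eq_mul, mul_comm]
    _ ≤ lowerPartialMoment μ T α := by
        refine integral_mono ((integrable_const _).indicator hs)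
          (integrable_max_sub_zero hT α) fun ω => ?_
        by_cases hω : T ω ≤ c
        · rw [indicator_of_mem (show ω ∈ {ω | T ω ≤ c} from hω)]
          exact le_max_of_le_left (by linarith)
        · rw [indicator_of_notMem (show ω ∉ {ω | T ω ≤ c} from hω)]
          exact le_max_right _ _

lemma lowerPartialMoment_le_sub_mul_measureReal [IsFiniteMeasure μ] (hTm : Measurable T)
    (hT : Integrable T μ) (hm : ∀ᵐ ω ∂μ, m ≤ T ω) (hmα : m ≤ α) :
    lowerPartialMoment μ T α ≤ (α - m) * μ.real {ω | T ω ≤ α} := by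
  have hs : MeasurableSet {ω | T ω ≤ α} := hTm measurableSet_Iic
  calc lowerPartialMoment μ T α ≤ ∫ ω, {ω | T ω ≤ α}.indicator (fun _ => α - m) ω ∂μ := by
        refine integral_mono_ae (integrable_max_sub_zero hT α)
          ((integrable_const _).indicator hs) ?_
        filter_upwards [hm] with ω hω
        by_cases hωα : T ω ≤ α
        · rw [indicator_of_mem (show ω ∈ {ω | T ω ≤ α} from hωα)]
          exact max_le (by linarith) (by linarith)
        · rw [indicator_of_notMem (show ω ∉ {ω | T ω ≤ α} from hωα)]
          exact (max_eq_right (by linarith)).le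
    _ = (α - m) * μ.real {ω | T ω ≤ α} := by
        rw [integral_indicator_const _ hs, smul_eq_mul, mul_comm]

lemma measureReal_le_pos_of_essInf_lt [IsFiniteMeasure μ] [NeZero μ]
    (hb : IsBoundedUnder (· ≤ ·) (ae μ) T) {c : ℝ} (hc : essInf T μ < c) :
    0 < μ.real {ω | T ω ≤ c} := by
  refine measureReal_nonneg.lt_of_ne' fun h => hc.not_ge ?_
  have hnull : μ {ω | T ω ≤ c} = 0 := (measureReal_eq_zero_iff).1 h
  refine le_essInf_of_ae_le c ?_ hb.isCoboundedUnder_ge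
  filter_upwards [measure_eq_zero_iff_ae_notMem.1 hnull] with ω hω
  exact (lt_of_not_ge hω).le

lemma lowerPartialMoment_pos [IsFiniteMeasure μ] [NeZero μ] (hTm : Measurable T)
    (hT : Integrable T μ) (hb : IsBoundedUnder (· ≤ ·) (ae μ) T) (hα : essInf T μ < α) :
    0 < lowerPartialMoment μ T α := by
  have hc : essInf T μ < (essInf T μ + α) / 2 := by linarith
  have := sub_mul_measureReal_le_lowerPartialMoment hTm hT α ((essInf T μ + α) / 2)
  nlinarith [measureReal_le_pos_of_essInf_lt hb hc]

lemma exists_pos_mul_sub_le_lowerPartialMoment [IsFiniteMeasure μ] [NeZero μ]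
    (hTm : Measurable T) (hT : Integrable T μ) (hb : IsBoundedUnder (· ≤ ·) (ae μ) T)
    {ε : ℝ} (hε : 0 < ε) :
    ∃ δ > 0, ∀ α, δ * (α - (essInf T μ + ε)) ≤ lowerPartialMoment μ T α :=
  ⟨_, measureReal_le_pos_of_essInf_lt hb (lt_add_of_pos_right _ hε), fun α => by
    rw [mul_comm]; exact sub_mul_measureReal_le_lowerPartialMoment hTm hT α _⟩

lemma tendsto_measureReal_le_nhdsGT_essInf [IsProbabilityMeasure μ] (hTm : Measurable T)
    (hb : IsBoundedUnder (· ≥ ·) (ae μ) T) (hatom : μ {ω | T ω = essInf T μ} = 0) :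
    Tendsto (fun c => μ.real {ω | T ω ≤ c}) (𝓝[>] essInf T μ) (𝓝 0) := by
  have : IsProbabilityMeasure (μ.map T) := Measure.isProbabilityMeasure_map hTm.aemeasurable
  have hcdf : cdf (μ.map T) = fun c => μ.real {ω | T ω ≤ c} := funext fun c => by
    rw [cdf_eq_real, map_measureReal_apply hTm measurableSet_Iic]
    rfl
  have hnull : μ {ω | T ω ≤ essInf T μ} = 0 := by
    refine measure_mono_null (fun ω (hω : T ω ≤ essInf T μ) => hω.lt_or_eq)
      (measure_union_null (meas_lt_essInf hb) hatom)
  have := ((cdf (μ.map T)).right_continuous (essInf T μ)).mono Ioi_subset_Ici_self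
  rw [hcdf] at this
  simpa only [measureReal_def, hnull, ENNReal.toReal_zero] using this.tendsto

lemma exists_lowerPartialMoment_lt_mul [IsProbabilityMeasure μ] (hTm : Measurable T)
    (hT : Integrable T μ) (hb : IsBoundedUnder (· ≥ ·) (ae μ) T)
    (hatom : μ {ω | T ω = essInf T μ} = 0) {ε : ℝ} (hε : 0 < ε) :
    ∃ α, essInf T μ < α ∧ lowerPartialMoment μ T α < ε * (α - essInf T μ) := by
  obtain ⟨α, hαε, hα⟩ := (((tendsto_measureReal_le_nhdsGT_essInf hTm hb hatom).eventually
    (gt_mem_nhds hε)).and self_mem_nhdsWithin).exists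
  refine ⟨α, hα, ?_⟩
  calc lowerPartialMoment μ T α ≤ (α - essInf T μ) * μ.real {ω | T ω ≤ α} :=
        lowerPartialMoment_le_sub_mul_measureReal hTm hT (ae_essInf_le hb) (le_of_lt hα)
    _ < ε * (α - essInf T μ) := by
        rw [mul_comm]; exact mul_lt_mul_of_pos_right hαε (sub_pos.2 hα)

end LowerPartialMoment

/-- The supremum is finite for `y ≥ 1` under the hypotheses below; elsewhere `⨆` may return the
junk value `0`, so every lemma assumes `1 ≤ y`. -/
noncomputable def penalizedSup (φ : ℝ → ℝ) (y : ℝ) : ℝ := ⨆ α, (α - y * φ α)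

section PenalizedSup

variable {φ : ℝ → ℝ} {m M E y : ℝ}

lemma sub_mul_le_of_forall_sub_le (hφ : ∀ α, 0 ≤ φ α) (hE : ∀ α, α - φ α ≤ E) (hy : 1 ≤ y)
    (α : ℝ) :
    α - y * φ α ≤ E := by
  nlinarith [hE α, hφ α]

lemma penalizedSup_le (hφ : ∀ α, 0 ≤ φ α) (hE : ∀ α, α - φ α ≤ E) (hy : 1 ≤ y) :
    penalizedSup φ y ≤ E :=
  ciSup_le (sub_mul_le_of_forall_sub_le hφ hE hy)

lemma le_penalizedSup (hφ : ∀ α, 0 ≤ φ α) (hE : ∀ α, α - φ α ≤ E) (hy : 1 ≤ y) (α : ℝ) :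
    α - y * φ α ≤ penalizedSup φ y :=
  le_ciSup ⟨E, forall_mem_range.2 (sub_mul_le_of_forall_sub_le hφ hE hy)⟩ α

lemma exists_mem_Icc_penalizedSup_eq (hcont : Continuous φ) (hφ : ∀ α, 0 ≤ φ α)
    (hE : ∀ α, α - φ α ≤ E) (hm : φ m = 0) (hM : φ M = M - E) (hy : 1 ≤ y) :
    ∃ α ∈ Icc m M, penalizedSup φ y = α - y * φ α := by
  have hmM : m ≤ M := by linarith [hE m, hφ M]
  obtain ⟨α₀, hα₀, hmax⟩ := isCompact_Icc.exists_isMaxOn (nonempty_Icc.2 hmM)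
    (show Continuous fun α => α - y * φ α by fun_prop).continuousOn
  refine ⟨α₀, hα₀, le_antisymm (ciSup_le fun α => ?_) (le_penalizedSup hφ hE hy α₀)⟩
  rcases le_total α m with h | h
  · calc α - y * φ α ≤ m - y * φ m := by rw [hm]; nlinarith [hφ α]
      _ ≤ _ := hmax ⟨le_rfl, hmM⟩
  rcases le_total α M with h' | h'
  · exact hmax ⟨h, h'⟩
  · calc α - y * φ α ≤ M - y * φ M := by
          rw [hM]; nlinarith [hE α, mul_nonneg (sub_nonneg.2 hy) (sub_nonneg.2 h')]
      _ ≤ _ := hmax ⟨hmM, le_rfl⟩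

lemma lt_penalizedSup (hφ : ∀ α, 0 ≤ φ α) (hE : ∀ α, α - φ α ≤ E)
    (hflat : ∀ ε > 0, ∃ α, m < α ∧ φ α < ε * (α - m)) (hy : 1 < y) :
    m < penalizedSup φ y := by
  have hy₀ : 0 < y := zero_lt_one.trans hy
  obtain ⟨α, -, hα⟩ := hflat y⁻¹ (inv_pos.2 hy₀)
  have : y * φ α < α - m := by
    simpa [← mul_assoc, hy₀.ne'] using mul_lt_mul_of_pos_left hα hy₀
  linarith [le_penalizedSup hφ hE hy.le α]

lemma strictAntiOn_penalizedSup (hcont : Continuous φ) (hφ : ∀ α, 0 ≤ φ α)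
    (hE : ∀ α, α - φ α ≤ E) (hm : φ m = 0) (hM : φ M = M - E)
    (hflat : ∀ ε > 0, ∃ α, m < α ∧ φ α < ε * (α - m)) (hpos : ∀ α, m < α → 0 < φ α) :
    StrictAntiOn (penalizedSup φ) (Ici 1) := by
  intro y (hy : 1 ≤ y) y' (hy' : 1 ≤ y') hyy'
  obtain ⟨α, -, hα⟩ := exists_mem_Icc_penalizedSup_eq hcont hφ hE hm hM hy'
  have hmα : m < α := by
    have := lt_penalizedSup hφ hE hflat (hy.trans_lt hyy')
    nlinarith [hφ α]
  calc penalizedSup φ y' = α - y' * φ α := hα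
    _ < α - y * φ α := by nlinarith [hpos α hmα]
    _ ≤ penalizedSup φ y := le_penalizedSup hφ hE hy α

lemma lipschitzOnWith_penalizedSup (hcont : Continuous φ) (hmono : Monotone φ)
    (hφ : ∀ α, 0 ≤ φ α) (hE : ∀ α, α - φ α ≤ E) (hm : φ m = 0) (hM : φ M = M - E) :
    LipschitzOnWith (M - E).toNNReal (penalizedSup φ) (Ici 1) := by
  refine LipschitzOnWith.of_le_add_mul' _ fun y hy y' hy' => ?_
  obtain ⟨α, hα, hGα⟩ := exists_mem_Icc_penalizedSup_eq hcont hφ hE hm hM hy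
  have hφα : φ α ≤ M - E := hM ▸ hmono hα.2
  have hyy' : y' - y ≤ dist y y' := by rw [dist_comm, Real.dist_eq]; exact le_abs_self _
  nlinarith [le_penalizedSup hφ hE hy' α, hφ α, dist_nonneg (x := y) (y := y')]

lemma penalizedSup_one (hφ : ∀ α, 0 ≤ φ α) (hE : ∀ α, α - φ α ≤ E) (hM : φ M = M - E) :
    penalizedSup φ 1 = E :=
  (penalizedSup_le hφ hE le_rfl).antisymm <| by
    simpa [hM] using le_penalizedSup hφ hE le_rfl M

lemma tendsto_penalizedSup_atTop (hφ : ∀ α, 0 ≤ φ α) (hE : ∀ α, α - φ α ≤ E) (hm : φ m = 0)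
    (hgrowth : ∀ ε > 0, ∃ δ > 0, ∀ α, δ * (α - (m + ε)) ≤ φ α) :
    Tendsto (penalizedSup φ) atTop (𝓝 m) := by
  refine tendsto_order.2 ⟨fun a ha => eventually_atTop.2 ⟨1, fun y hy => ?_⟩, fun a ha => ?_⟩
  · exact ha.trans_le (by simpa [hm] using le_penalizedSup hφ hE hy m)
  obtain ⟨δ, hδ, hφδ⟩ := hgrowth ((a - m) / 2) (by linarith)
  refine eventually_atTop.2 ⟨max 1 δ⁻¹, fun y hy => ?_⟩
  have hyδ : 1 ≤ y * δ := by
    rw [← inv_le_iff_one_le_mul₀ hδ]; exact le_of_max_le_right hy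
  refine (ciSup_le fun α => ?_).trans_lt (by linarith : m + (a - m) / 2 < a)
  rcases le_total α (m + (a - m) / 2) with h | h
  · nlinarith [hφ α, le_of_max_le_left hy]
  · nlinarith [hφδ α, le_of_max_le_left hy]

lemma continuousOn_penalizedSup_inv (hcont : Continuous φ) (hmono : Monotone φ)
    (hφ : ∀ α, 0 ≤ φ α) (hE : ∀ α, α - φ α ≤ E) (hm : φ m = 0) (hM : φ M = M - E) :
    ContinuousOn (fun γ => penalizedSup φ γ⁻¹) (Ioo 0 1) :=
  (lipschitzOnWith_penalizedSup hcont hmono hφ hE hm hM).continuousOn.comp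
    (continuousOn_inv₀.mono fun _ hγ => hγ.1.ne')
    (mapsTo_inv_Ioo_zero_one.mono_right Ioi_subset_Ici_self)

lemma strictMonoOn_penalizedSup_inv (hcont : Continuous φ) (hφ : ∀ α, 0 ≤ φ α)
    (hE : ∀ α, α - φ α ≤ E) (hm : φ m = 0) (hM : φ M = M - E)
    (hflat : ∀ ε > 0, ∃ α, m < α ∧ φ α < ε * (α - m)) (hpos : ∀ α, m < α → 0 < φ α) :
    StrictMonoOn (fun γ => penalizedSup φ γ⁻¹) (Ioo 0 1) :=
  (strictAntiOn_penalizedSup hcont hφ hE hm hM hflat hpos).comp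
    (strictAntiOn_inv_pos.mono fun _ hγ => hγ.1)
    (mapsTo_inv_Ioo_zero_one.mono_right Ioi_subset_Ici_self)

lemma tendsto_penalizedSup_inv_nhdsGT_zero (hφ : ∀ α, 0 ≤ φ α) (hE : ∀ α, α - φ α ≤ E)
    (hm : φ m = 0) (hgrowth : ∀ ε > 0, ∃ δ > 0, ∀ α, δ * (α - (m + ε)) ≤ φ α) :
    Tendsto (fun γ => penalizedSup φ γ⁻¹) (𝓝[>] 0) (𝓝 m) :=
  (tendsto_penalizedSup_atTop hφ hE hm hgrowth).comp tendsto_inv_nhdsGT_zero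

lemma tendsto_penalizedSup_inv_nhdsLT_one (hcont : Continuous φ) (hmono : Monotone φ)
    (hφ : ∀ α, 0 ≤ φ α) (hE : ∀ α, α - φ α ≤ E) (hm : φ m = 0) (hM : φ M = M - E) :
    Tendsto (fun γ => penalizedSup φ γ⁻¹) (𝓝[<] 1) (𝓝 E) := by
  have h := ((lipschitzOnWith_penalizedSup hcont hmono hφ hE hm hM).continuousOn 1
    self_mem_Ici).mono Ioi_subset_Ici_self
  rw [ContinuousWithinAt, penalizedSup_one hφ hE hM] at h
  exact h.comp tendsto_inv_nhdsLT_one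

end PenalizedSup

/-- For an essentially bounded random variable `T` with atomless law, the function
`g(γ) = sup_α (α - γ⁻¹ E[(α - T)₊])` is continuous and strictly increasing on `(0,1)`, tends to
`essInf T` as `γ → 0⁺` and to `E[T]` as `γ → 1⁻`, and its range on `(0,1)` is the open interval
`(essInf T, E[T])`. -/
theorem stmt_2 {Ω : Type*} [MeasureSpace Ω] [IsProbabilityMeasure (volume : Measure Ω)]
    (T : Ω → ℝ) (hTmeas : Measurable T) (hTbdd : MemLp T ⊤ volume)
    (hatomless : ∀ x : ℝ, volume {ω | T ω = x} = 0)
    (g : ℝ → ℝ)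
    (hg : ∀ γ ∈ Set.Ioo (0 : ℝ) 1,
      g γ = ⨆ α : ℝ, (α - γ⁻¹ * ∫ ω, max (α - T ω) 0)) :
    ContinuousOn g (Set.Ioo 0 1) ∧
    StrictMonoOn g (Set.Ioo 0 1) ∧
    Filter.Tendsto g (nhdsWithin 0 (Set.Ioi 0)) (nhds (essInf T volume)) ∧
    Filter.Tendsto g (nhdsWithin 1 (Set.Iio 1)) (nhds (∫ ω, T ω)) ∧
    g '' Set.Ioo 0 1 = Set.Ioo (essInf T volume) (∫ ω, T ω) := by
  have hT := hTbdd.integrable le_top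
  obtain ⟨hle, hge⟩ := isBoundedUnder_le_abs.1 hTbdd.isBoundedUnder_abs_top
  have hcont := (lipschitzWith_lowerPartialMoment hT).continuous
  have hmono := lowerPartialMoment_mono hT
  have hφ := lowerPartialMoment_nonneg (μ := volume) (T := T)
  have hE := sub_lowerPartialMoment_le_integral hT
  have hm := lowerPartialMoment_eq_zero (ae_essInf_le hge)
  have hM := lowerPartialMoment_eq_sub_integral hT (ae_le_essSup hle)
  have hflat := fun ε (hε : 0 < ε) =>
    exists_lowerPartialMoment_lt_mul hTmeas hT hge (hatomless _) hε
  have hgrowth := fun ε (hε : 0 < ε) =>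
    exists_pos_mul_sub_le_lowerPartialMoment hTmeas hT hle hε
  have hpos := fun α => lowerPartialMoment_pos (α := α) hTmeas hT hle
  have hgG : EqOn g (fun γ => penalizedSup (lowerPartialMoment volume T) γ⁻¹) (Ioo 0 1) := hg
  have hc := (continuousOn_penalizedSup_inv hcont hmono hφ hE hm hM).congr hgG
  have hs : StrictMonoOn g (Ioo 0 1) := fun a ha b hb hab => (hgG ha).trans_lt <|
    (strictMonoOn_penalizedSup_inv hcont hφ hE hm hM hflat hpos ha hb hab).trans_eq (hgG hb).symm
  have h0 := (tendsto_penalizedSup_inv_nhdsGT_zero hφ hE hm hgrowth).congr'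
    (eventuallyEq_of_mem (Ioo_mem_nhdsGT one_pos) hgG.symm)
  have h1 := (tendsto_penalizedSup_inv_nhdsLT_one hcont hmono hφ hE hm hM).congr'
    (eventuallyEq_of_mem (Ioo_mem_nhdsLT one_pos) hgG.symm)
  exact ⟨hc, hs, h0, h1, hs.image_Ioo_eq_of_tendsto one_pos hc h0 h1⟩
end

section
/- Let (Ω, ℱ, P) be a probability space with Ω a standard Borel space, 𝒳 a standard Borel space, X : Ω → 𝒳 measurable, A : Ω → {−1, 1} a random variable, and T, C : Ω → ℝ random variables with 0 ≤ T ≤ h almost surely for some h > 0, such that T and C are conditionally independent given σ(X, A). Set Y = min(T, C) and Δ = 1{T ≤ C}. Let κ be a regular conditional distribution of C given (X, A), set S_C(t, x, a) = κ(x, a)([t, ∞)), and assume S_C(h, X, A) ≥ η_C almost surely for some η_C > 0. Let π : {−1,1} × 𝒳 → ℝ be measurable with η ≤ π ≤ 1 for some η > 0, let d : 𝒳 → {−1, 1} be measurable, and let γ ∈ (0,1). Then for every α ∈ ℝ, E[(α − T)·1{T ≤ α} · 1{A = d(X)} / π(A, X)] = E[Δ·(α − Y)·1{Y ≤ α} ·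 1{A = d(X)} / (S_C(Y, X, A)·π(A, X))], and consequently sup_{α∈ℝ} {αγ − E[(α − T)·1{T ≤ α}·1{A = d(X)}/π(A, X)]} = sup_{α∈ℝ} {αγ − E[Δ·(α − Y)·1{Y ≤ α}·1{A = d(X)}/(S_C(Y, X, A)·π(A, X))]}. -/
/-!
Write `Z = (X, A)`. Conditional independence of `T` and `C` given `Z` means that the law of `C`
given `(Z, T)` is the censoring kernel `κ(Z)` alone, so that
`E[g(Z, T) 1{T ≤ C}] = E[g(Z, T) S_C(T, Z)]` for integrable `g(Z, T)`. Applied to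
`g = φ / S_C` this is the inverse-probability-of-censoring identity
`E[φ(Z, T)] = E[Δ φ(Z, Y) / S_C(Y, Z)]`, where `φ / S_C` stays integrable because
`S_C(T, Z) ≥ S_C(h, Z) ≥ η_C` almost surely. The suprema over `α` then agree term by term.
-/

open MeasureTheory ProbabilityTheory Set

theorem MeasureTheory.Measure.measurable_of_measurable_toReal_coe {α β : Type*}
    [MeasurableSpace α] [MeasurableSpace β] (μ : α → Measure β) [∀ a, IsFiniteMeasure (μ a)]
    (h : ∀ s, MeasurableSet s → Measurable fun a => (μ a s).toReal) : Measurable μ := by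
  refine Measure.measurable_of_measurable_coe μ fun s hs => ?_
  simpa only [ENNReal.ofReal_toReal (measure_ne_top _ _)] using (h s hs).ennreal_ofReal

theorem ProbabilityTheory.Kernel.measurable_apply_Ici {β : Type*} [MeasurableSpace β]
    (K : Kernel β ℝ) [IsSFiniteKernel K] : Measurable fun p : β × ℝ => K p.1 (Ici p.2) :=
  (K.prodMkRight ℝ).measurable_kernel_prodMk_left
    (measurableSet_le (measurable_snd.comp measurable_fst) measurable_snd)

theorem abs_sub_mul_ite_le_le_abs {a t : ℝ} (ht : 0 ≤ t) :
    |(a - t) * (if t ≤ a then 1 else 0)| ≤ |a| := by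
  split_ifs with hta
  · rw [mul_one, abs_of_nonneg (sub_nonneg.2 hta), abs_of_nonneg (ht.trans hta)]
    linarith
  · simp

section Shortfall

variable {𝒳 : Type*} {π : ℝ × 𝒳 → ℝ} {d : 𝒳 → ℝ}

/-- `weightedShortfall π d α ((x, a), t) = (α - t)⁺ · 1{a = d x} / π(a, x)`, the integrand of the
CVaR criterion of the rule `d`. -/
noncomputable def weightedShortfall (π : ℝ × 𝒳 → ℝ) (d : 𝒳 → ℝ) (α : ℝ) (w : (𝒳 × ℝ) × ℝ) : ℝ :=
  (α - w.2) * (if w.2 ≤ α then 1 else 0) * (if w.1.2 = d w.1.1 then 1 else 0) / π (w.1.2, w.1.1)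

theorem measurable_weightedShortfall [MeasurableSpace 𝒳] (hπ : Measurable π) (hd : Measurable d)
    (α : ℝ) : Measurable (weightedShortfall π d α) := by
  refine Measurable.div (Measurable.mul (Measurable.mul ?_ ?_) ?_)
    (hπ.comp (measurable_fst.snd.prodMk measurable_fst.fst))
  · fun_prop
  · exact Measurable.ite (measurableSet_le measurable_snd measurable_const) measurable_const
      measurable_const
  · exact Measurable.ite (measurableSet_eq_fun measurable_fst.snd (hd.comp measurable_fst.fst))
      measurable_const measurable_const

theorem norm_weightedShortfall_le {η α : ℝ} (hη : 0 < η) (hπη : ∀ a x, η ≤ π (a, x))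
    {w : (𝒳 × ℝ) × ℝ} (hw : 0 ≤ w.2) : ‖weightedShortfall π d α w‖ ≤ |α| / η := by
  have hd_ite : |(if w.1.2 = d w.1.1 then 1 else 0 : ℝ)| ≤ 1 := by split_ifs <;> simp
  rw [weightedShortfall, Real.norm_eq_abs, abs_div, abs_mul, abs_of_pos (hη.trans_le (hπη _ _))]
  exact div_le_div₀ (abs_nonneg α)
    ((mul_le_of_le_one_right (abs_nonneg _) hd_ite).trans (abs_sub_mul_ite_le_le_abs hw))
    hη (hπη _ _)

end Shortfall

namespace ProbabilityTheory

variable {Ω β : Type*} [MeasurableSpace Ω] [MeasurableSpace β] {P : Measure Ω} {Z : Ω → β}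

theorem condDistrib_ae_eq_of_forall_condExp [IsFiniteMeasure P] {γ : Type*} [MeasurableSpace γ]
    [StandardBorelSpace γ] [Nonempty γ] {C : Ω → γ} (hZ : Measurable Z) (hC : Measurable C)
    (K : Kernel β γ) [IsFiniteKernel K]
    (hK : ∀ B, MeasurableSet B →
      (fun ω => (K (Z ω) B).toReal) =ᵐ[P] P⟦C ⁻¹' B | MeasurableSpace.comap Z inferInstance⟧) :
    condDistrib C Z P =ᵐ[P.map Z] K := by
  refine condDistrib_ae_eq_of_measure_eq_compProd Z hC.aemeasurable (Measure.ext_prod ?_)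
  intro S B hS hB
  have hsame : ∀ᵐ ω ∂P, K (Z ω) B = condDistrib C Z P (Z ω) B := by
    filter_upwards [hK B hB, condDistrib_ae_eq_condExp hZ hC hB (μ := P)] with ω hKω hcd
    rw [← ENNReal.toReal_eq_toReal_iff' (measure_ne_top _ _) (measure_ne_top _ _), hKω, ← hcd,
      measureReal_def]
  rw [Measure.map_apply (hZ.prodMk hC) (hS.prod hB), mk_preimage_prod,
    Measure.compProd_apply_prod hS hB, setLIntegral_map hS (K.measurable_coe hB) hZ,
    setLIntegral_congr_fun_ae (hZ hS) (hsame.mono fun ω h _ => h),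
    setLIntegral_preimage_condDistrib hZ hC.aemeasurable hB hS]

theorem map_prod_eq_compProd_prodMkRight_of_condIndepFun [StandardBorelSpace Ω]
    [IsFiniteMeasure P] {γ δ : Type*} [MeasurableSpace γ] [StandardBorelSpace γ] [Nonempty γ]
    [MeasurableSpace δ] [StandardBorelSpace δ] [Nonempty δ] {T : Ω → δ} {C : Ω → γ}
    (hZ : Measurable Z) (hT : Measurable T) (hC : Measurable C) (hindep : T ⟂ᵢ[Z, hZ; P] C)
    {K : Kernel β γ} [IsFiniteKernel K] (hK : condDistrib C Z P =ᵐ[P.map Z] K) :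
    P.map (fun ω => ((Z ω, T ω), C ω)) = P.map (fun ω => (Z ω, T ω)) ⊗ₘ K.prodMkRight δ := by
  have hfst : Measure.QuasiMeasurePreserving Prod.fst (P.map fun ω => (Z ω, T ω)) (P.map Z) :=
    ⟨measurable_fst, by rw [← Measure.fst, Measure.fst_map_prodMk hT]⟩
  have hcond : condDistrib C (fun ω => (Z ω, T ω)) P =ᵐ[P.map fun ω => (Z ω, T ω)]
      K.prodMkRight δ :=
    ((condIndepFun_iff_condDistrib_prod_ae_eq_prodMkRight hC hT hZ).1 hindep).trans
      (hfst.ae_eq hK)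
  rw [← Measure.compProd_congr hcond, compProd_map_condDistrib hC.aemeasurable]

section Censoring

variable [SFinite P] {T C : Ω → ℝ} {K : Kernel β ℝ} [IsSFiniteKernel K]

theorem integral_mul_ite_le_eq_integral_mul_survival
    (hZ : Measurable Z) (hT : Measurable T) (hC : Measurable C)
    (hjoint : P.map (fun ω => ((Z ω, T ω), C ω)) = P.map (fun ω => (Z ω, T ω)) ⊗ₘ K.prodMkRight ℝ)
    {g : β × ℝ → ℝ} (hg : Measurable g) (hgi : Integrable (fun ω => g (Z ω, T ω)) P) :
    ∫ ω, g (Z ω, T ω) * (if T ω ≤ C ω then 1 else 0) ∂P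
      = ∫ ω, g (Z ω, T ω) * (K (Z ω) (Ici (T ω))).toReal ∂P := by
  have hW : Measurable fun ω => (Z ω, T ω) := hZ.prodMk hT
  set F : (β × ℝ) × ℝ → ℝ := fun p => g p.1 * if p.1.2 ≤ p.2 then 1 else 0
  have hF : Measurable F := (hg.comp measurable_fst).mul <|
    Measurable.ite (measurableSet_le (measurable_snd.comp measurable_fst) measurable_snd)
      measurable_const measurable_const
  have hFi : Integrable F (P.map fun ω => ((Z ω, T ω), C ω)) := by
    refine (integrable_map_measure hF.aestronglyMeasurable (hW.prodMk hC).aemeasurable).2 ?_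
    refine hgi.mono (hF.comp (hW.prodMk hC)).aestronglyMeasurable (ae_of_all _ fun ω => ?_)
    simp only [Function.comp_apply, F, norm_mul]
    split_ifs <;> simp
  have hinner : ∀ w : β × ℝ,
      ∫ c, F (w, c) ∂(K.prodMkRight ℝ w) = g w * (K w.1 (Ici w.2)).toReal := by
    intro w
    have hind : (fun c => if w.2 ≤ c then (1 : ℝ) else 0) = (Ici w.2).indicator 1 := by
      ext c; simp [indicator_apply]
    simp only [F, Kernel.prodMkRight_apply]
    rw [integral_const_mul, hind, integral_indicator_one measurableSet_Ici, measureReal_def]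
  calc ∫ ω, g (Z ω, T ω) * (if T ω ≤ C ω then 1 else 0) ∂P
      = ∫ p, F p ∂(P.map fun ω => ((Z ω, T ω), C ω)) :=
        (integral_map (hW.prodMk hC).aemeasurable hF.aestronglyMeasurable).symm
    _ = ∫ w, ∫ c, F (w, c) ∂(K.prodMkRight ℝ w) ∂(P.map fun ω => (Z ω, T ω)) := by
        rw [hjoint] at hFi ⊢
        exact Measure.integral_compProd hFi
    _ = ∫ w, g w * (K w.1 (Ici w.2)).toReal ∂(P.map fun ω => (Z ω, T ω)) := by
        simp only [hinner]
    _ = ∫ ω, g (Z ω, T ω) * (K (Z ω) (Ici (T ω))).toReal ∂P :=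
        integral_map hW.aemeasurable
          (hg.mul K.measurable_apply_Ici.ennreal_toReal).aestronglyMeasurable

theorem integral_eq_integral_ipcw
    (hZ : Measurable Z) (hT : Measurable T) (hC : Measurable C)
    (hjoint : P.map (fun ω => ((Z ω, T ω), C ω)) = P.map (fun ω => (Z ω, T ω)) ⊗ₘ K.prodMkRight ℝ)
    {φ : β × ℝ → ℝ} (hφ : Measurable φ) (hφi : Integrable (fun ω => φ (Z ω, T ω)) P)
    {ε : ℝ} (hε : 0 < ε) (hS : ∀ᵐ ω ∂P, ε ≤ (K (Z ω) (Ici (T ω))).toReal) :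
    ∫ ω, φ (Z ω, T ω) ∂P
      = ∫ ω, (if T ω ≤ C ω then 1 else 0) * φ (Z ω, min (T ω) (C ω))
          / (K (Z ω) (Ici (min (T ω) (C ω)))).toReal ∂P := by
  set g : β × ℝ → ℝ := fun w => φ w / (K w.1 (Ici w.2)).toReal
  have hg : Measurable g := hφ.div K.measurable_apply_Ici.ennreal_toReal
  have hgi : Integrable (fun ω => g (Z ω, T ω)) P := by
    refine (hφi.norm.div_const ε).mono' (hg.comp (hZ.prodMk hT)).aestronglyMeasurable ?_
    filter_upwards [hS] with ω hω
    rw [norm_div, Real.norm_of_nonneg (hε.le.trans hω)]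
    exact div_le_div_of_nonneg_left (norm_nonneg _) hε hω
  calc ∫ ω, φ (Z ω, T ω) ∂P
      = ∫ ω, g (Z ω, T ω) * (K (Z ω) (Ici (T ω))).toReal ∂P :=
        integral_congr_ae <| hS.mono fun ω hω => (div_mul_cancel₀ _ (hε.trans_le hω).ne').symm
    _ = ∫ ω, g (Z ω, T ω) * (if T ω ≤ C ω then 1 else 0) ∂P :=
        (integral_mul_ite_le_eq_integral_mul_survival hZ hT hC hjoint hg hgi).symm
    _ = _ := by
        refine integral_congr_ae (ae_of_all _ fun ω => ?_)
        by_cases hTC : T ω ≤ C ω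
        · simp only [g, if_pos hTC, min_eq_left hTC]
          ring
        · simp [if_neg hTC]

end Censoring

end ProbabilityTheory

theorem stmt_4_general {Ω 𝒳 : Type*} [mΩ : MeasurableSpace Ω] [StandardBorelSpace Ω]
    [MeasurableSpace 𝒳]
    (P : Measure Ω) [IsProbabilityMeasure P]
    (X : Ω → 𝒳) (hX : Measurable X)
    (A : Ω → ℝ) (hA : Measurable A)
    (T C : Ω → ℝ) (hT : Measurable T) (hC : Measurable C)
    (h : ℝ) (hTb : ∀ᵐ ω ∂P, 0 ≤ T ω ∧ T ω ≤ h)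
    (hindep : CondIndepFun (MeasurableSpace.comap (fun ω => (X ω, A ω)) inferInstance)
      ((hX.prodMk hA).comap_le) T C P)
    (κ : 𝒳 → ℝ → Measure ℝ) (hκprob : ∀ x a, IsProbabilityMeasure (κ x a))
    (hκmeas : ∀ B : Set ℝ, MeasurableSet B →
      Measurable fun p : 𝒳 × ℝ => (κ p.1 p.2 B).toReal)
    (hκver : ∀ B : Set ℝ, MeasurableSet B →
      (fun ω => (κ (X ω) (A ω) B).toReal) =ᵐ[P]
        P[fun ω => B.indicator (fun _ => (1 : ℝ)) (C ω) |
          MeasurableSpace.comap (fun ω => (X ω, A ω)) inferInstance])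
    (ηC : ℝ) (hηC : 0 < ηC)
    (hSpos : ∀ᵐ ω ∂P, ηC ≤ (κ (X ω) (A ω) (Set.Ici h)).toReal)
    (π : ℝ × 𝒳 → ℝ) (hπ : Measurable π) (η : ℝ) (hη : 0 < η)
    (hπb : ∀ a x, η ≤ π (a, x) ∧ π (a, x) ≤ 1)
    (d : 𝒳 → ℝ) (hd : Measurable d)
    (γ : ℝ) :
    (∀ α : ℝ,
      ∫ ω, (α - T ω) * (if T ω ≤ α then (1 : ℝ) else 0)
          * (if A ω = d (X ω) then (1 : ℝ) else 0) / π (A ω, X ω) ∂P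
        = ∫ ω, (if T ω ≤ C ω then (1 : ℝ) else 0) * (α - min (T ω) (C ω))
            * (if min (T ω) (C ω) ≤ α then (1 : ℝ) else 0)
            * (if A ω = d (X ω) then (1 : ℝ) else 0)
            / ((κ (X ω) (A ω) (Set.Ici (min (T ω) (C ω)))).toReal * π (A ω, X ω)) ∂P) ∧
    (⨆ α : ℝ, (α * γ -
        ∫ ω, (α - T ω) * (if T ω ≤ α then (1 : ℝ) else 0)
          * (if A ω = d (X ω) then (1 : ℝ) else 0) / π (A ω, X ω) ∂P)
      = ⨆ α : ℝ, (α * γ -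
        ∫ ω, (if T ω ≤ C ω then (1 : ℝ) else 0) * (α - min (T ω) (C ω))
            * (if min (T ω) (C ω) ≤ α then (1 : ℝ) else 0)
            * (if A ω = d (X ω) then (1 : ℝ) else 0)
            / ((κ (X ω) (A ω) (Set.Ici (min (T ω) (C ω)))).toReal * π (A ω, X ω)) ∂P)) := by
  have hZ : Measurable fun ω => (X ω, A ω) := hX.prodMk hA
  let K : Kernel (𝒳 × ℝ) ℝ :=
    ⟨fun p => κ p.1 p.2, Measure.measurable_of_measurable_toReal_coe _ hκmeas⟩
  have : IsMarkovKernel K := ⟨fun p => hκprob p.1 p.2⟩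
  have hjoint := map_prod_eq_compProd_prodMkRight_of_condIndepFun hZ hT hC hindep
    (condDistrib_ae_eq_of_forall_condExp hZ hC K hκver)
  have hS : ∀ᵐ ω ∂P, ηC ≤ (K (X ω, A ω) (Ici (T ω))).toReal := by
    filter_upwards [hTb, hSpos] with ω hTω hSω
    exact hSω.trans <|
      ENNReal.toReal_mono (measure_ne_top _ _) (measure_mono (Ici_subset_Ici.2 hTω.2))
  suffices hvalue : ∀ α : ℝ, _ from ⟨hvalue, iSup_congr fun α => by rw [hvalue α]⟩
  intro α
  have hπη : ∀ a x, η ≤ π (a, x) := fun a x => (hπb a x).1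
  have hφi : Integrable (fun ω => weightedShortfall π d α ((X ω, A ω), T ω)) P :=
    .of_bound ((measurable_weightedShortfall hπ hd α).comp (hZ.prodMk hT)).aestronglyMeasurable
      (|α| / η) (hTb.mono fun ω hTω => norm_weightedShortfall_le hη hπη hTω.1)
  refine (integral_eq_integral_ipcw hZ hT hC hjoint (measurable_weightedShortfall hπ hd α) hφi hηC
    hS).trans (integral_congr_ae (ae_of_all _ fun ω => ?_))
  simp only [weightedShortfall, K, Kernel.coe_mk]
  ring

/-- CVaR-criterion part of Lemma 2 of the paper. With right-censored data
`Y = min(T,C)`, `Δ = 1{T ≤ C}`, conditional censoring survival function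
`S_C(t,x,a) = κ x a [t,∞)` and propensity `π`, for every `α ∈ ℝ`,
`E[(α-T)·1{T≤α}·1{A=d(X)}/π(A,X)] = E[Δ(α-Y)·1{Y≤α}·1{A=d(X)}/(S_C(Y,X,A)π(A,X))]`,
and consequently the corresponding suprema over `α` of `αγ - E[⋯]` agree. -/
theorem stmt_4 {Ω 𝒳 : Type*} [mΩ : MeasurableSpace Ω] [StandardBorelSpace Ω]
    [MeasurableSpace 𝒳]
    (P : Measure Ω) [IsProbabilityMeasure P]
    (X : Ω → 𝒳) (hX : Measurable X)
    (A : Ω → ℝ) (hA : Measurable A) (hAval : ∀ ω, A ω = 1 ∨ A ω = -1)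
    (T C : Ω → ℝ) (hT : Measurable T) (hC : Measurable C)
    (h : ℝ) (hh : 0 < h) (hTb : ∀ᵐ ω ∂P, 0 ≤ T ω ∧ T ω ≤ h)
    (hindep : CondIndepFun (MeasurableSpace.comap (fun ω => (X ω, A ω)) inferInstance)
      ((hX.prodMk hA).comap_le) T C P)
    (κ : 𝒳 → ℝ → Measure ℝ) (hκprob : ∀ x a, IsProbabilityMeasure (κ x a))
    (hκmeas : ∀ B : Set ℝ, MeasurableSet B →
      Measurable fun p : 𝒳 × ℝ => (κ p.1 p.2 B).toReal)
    (hκver : ∀ B : Set ℝ, MeasurableSet B →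
      (fun ω => (κ (X ω) (A ω) B).toReal) =ᵐ[P]
        P[fun ω => B.indicator (fun _ => (1 : ℝ)) (C ω) |
          MeasurableSpace.comap (fun ω => (X ω, A ω)) inferInstance])
    (ηC : ℝ) (hηC : 0 < ηC)
    (hSpos : ∀ᵐ ω ∂P, ηC ≤ (κ (X ω) (A ω) (Set.Ici h)).toReal)
    (π : ℝ × 𝒳 → ℝ) (hπ : Measurable π) (η : ℝ) (hη : 0 < η)
    (hπb : ∀ a x, η ≤ π (a, x) ∧ π (a, x) ≤ 1)
    (d : 𝒳 → ℝ) (hd : Measurable d) (hdval : ∀ x, d x = 1 ∨ d x = -1)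
    (γ : ℝ) (hγ : γ ∈ Set.Ioo (0 : ℝ) 1) :
    (∀ α : ℝ,
      ∫ ω, (α - T ω) * (if T ω ≤ α then (1 : ℝ) else 0)
          * (if A ω = d (X ω) then (1 : ℝ) else 0) / π (A ω, X ω) ∂P
        = ∫ ω, (if T ω ≤ C ω then (1 : ℝ) else 0) * (α - min (T ω) (C ω))
            * (if min (T ω) (C ω) ≤ α then (1 : ℝ) else 0)
            * (if A ω = d (X ω) then (1 : ℝ) else 0)
            / ((κ (X ω) (A ω) (Set.Ici (min (T ω) (C ω)))).toReal * π (A ω, X ω)) ∂P) ∧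
    (⨆ α : ℝ, (α * γ -
        ∫ ω, (α - T ω) * (if T ω ≤ α then (1 : ℝ) else 0)
          * (if A ω = d (X ω) then (1 : ℝ) else 0) / π (A ω, X ω) ∂P)
      = ⨆ α : ℝ, (α * γ -
        ∫ ω, (if T ω ≤ C ω then (1 : ℝ) else 0) * (α - min (T ω) (C ω))
            * (if min (T ω) (C ω) ≤ α then (1 : ℝ) else 0)
            * (if A ω = d (X ω) then (1 : ℝ) else 0)
            / ((κ (X ω) (A ω) (Set.Ici (min (T ω) (C ω)))).toReal * π (A ω, X ω)) ∂P)) :=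
  stmt_4_general (mΩ := mΩ) P X hX A hA T C hT hC h hTb hindep κ hκprob hκmeas hκver ηC hηC hSpos π
    hπ η hη hπb d hd γ
end

section
/- Let (Ω, ℱ, P) be a probability space with Ω a standard Borel space, 𝒳 a standard Borel space, X : Ω → 𝒳 measurable, A : Ω → {−1, 1} a random variable, and T₁, T₋₁ integrable real random variables such that A is conditionally independent of the pair (T₁, T₋₁) given σ(X). Define T = T₁·1{A = 1} + T₋₁·1{A = −1}. Let π : {−1,1} × 𝒳 → ℝ be measurable with η ≤ π(a, x) ≤ 1 for all (a, x) and some η > 0, and such that for each a ∈ {−1, 1}, ω ↦ π(a, X(ω)) is a version of the conditional probability P(A = a ∣ σ(X)). Then for every measurable d : 𝒳 → {−1, 1}, E[T₁·1{d(X) = 1} + T₋₁·1{d(X) = −1}] = E[1{A = d(X)} · T / π(A, X)]. -/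
/-!
Fix an arm `a ∈ {1, -1}` and put `B = {A = a}`, `h = 1{d(X) = a} / π(a, X)` (bounded and
`σ(X)`-measurable) and `f = T_a` (`σ(T₁, T₋₁)`-measurable). Conditional independence says
`P(B ∩ s | X) = P(B | X) P(s | X)` for every `s ∈ σ(T₁, T₋₁)`, so pulling the `σ(X)`-measurable `h`
in and out of conditional expectations gives `∫_s 1_B h = ∫_s P(B | X) h`. Hence `1_B h` and
`P(B | X) h` have the same conditional expectation given `σ(T₁, T₋₁)`, and pairing with `f` yields
`E[f 1_B h] = E[f P(B | X) h] = E[f 1{d(X) = a}]` without approximating `f` by simple functions.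
The theorem is the sum of the two arms, because
`1{A = d(X)} T / π(A, X) = Σ_a T_a 1{A = a} 1{d(X) = a} / π(a, X)`.
-/

open MeasureTheory ProbabilityTheory

section CondIndep

variable {Ω : Type*} {m m₁ n mΩ : MeasurableSpace Ω} {μ : Measure Ω}

lemma ae_norm_mul_le_of_norm_le_one {u h : Ω → ℝ} {C : ℝ} (hu : ∀ᵐ ω ∂μ, ‖u ω‖ ≤ 1)
    (hh : ∀ᵐ ω ∂μ, ‖h ω‖ ≤ C) : ∀ᵐ ω ∂μ, ‖u ω * h ω‖ ≤ C := by
  filter_upwards [hu, hh] with ω huω hhω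
  rw [norm_mul]
  exact (mul_le_of_le_one_left (norm_nonneg _) huω).trans hhω

lemma norm_div_le_div_of_norm_le_of_le {x y C η : ℝ} (hx : ‖x‖ ≤ C) (hη : 0 < η)
    (hy : η ≤ y) : ‖x / y‖ ≤ C / η := by
  rw [norm_div, Real.norm_of_nonneg (hη.le.trans hy)]
  exact div_le_div₀ ((norm_nonneg _).trans hx) hx hη hy

lemma norm_indicator_one_le_one (B : Set Ω) (ω : Ω) : ‖B.indicator (1 : Ω → ℝ) ω‖ ≤ 1 :=
  (norm_indicator_le_norm_self _ _).trans norm_one.le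

lemma ae_norm_condExp_indicator_le_one (B : Set Ω) : ∀ᵐ ω ∂μ, ‖(μ⟦B | m⟧) ω‖ ≤ 1 :=
  ae_bdd_norm_condExp_of_ae_bdd_norm (ae_of_all _ (norm_indicator_one_le_one B))

variable [IsFiniteMeasure μ]

lemma integral_mul_condExp_of_stronglyMeasurable (hm : m ≤ mΩ) {k g : Ω → ℝ}
    (hk : StronglyMeasurable[m] k) (hkg : Integrable (fun ω ↦ k ω * g ω) μ)
    (hg : Integrable g μ) :
    ∫ ω, k ω * μ[g | m] ω ∂μ = ∫ ω, k ω * g ω ∂μ :=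
  calc ∫ ω, k ω * μ[g | m] ω ∂μ = ∫ ω, μ[k * g | m] ω ∂μ :=
        integral_congr_ae (condExp_mul_of_stronglyMeasurable_left hk hkg hg).symm
    _ = ∫ ω, k ω * g ω ∂μ := integral_condExp hm

variable [StandardBorelSpace Ω] {hm : m ≤ mΩ} {B : Set Ω} {h : Ω → ℝ} {C : ℝ}

lemma CondIndep.setIntegral_indicator_mul (hindep : CondIndep m m₁ n hm μ) (hm₁ : m₁ ≤ mΩ)
    (hn : n ≤ mΩ) (hB : MeasurableSet[m₁] B) {s : Set Ω} (hs : MeasurableSet[n] s)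
    (hh : StronglyMeasurable[m] h) (hC : ∀ᵐ ω ∂μ, ‖h ω‖ ≤ C) :
    ∫ ω in s, B.indicator 1 ω * h ω ∂μ = ∫ ω in s, (μ⟦B | m⟧) ω * h ω ∂μ := by
  have hs' : MeasurableSet s := hn s hs
  have hBs : MeasurableSet (B ∩ s) := (hm₁ B hB).inter hs'
  have hfactor : μ⟦B ∩ s | m⟧ =ᵐ[μ] μ⟦B | m⟧ * μ⟦s | m⟧ :=
    (condIndep_iff m m₁ n hm hm₁ hn μ).1 hindep B s hB hs
  have hq := ae_norm_condExp_indicator_le_one (μ := μ) (m := m) B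
  calc ∫ ω in s, B.indicator 1 ω * h ω ∂μ = ∫ ω, h ω * (B ∩ s).indicator 1 ω ∂μ := by
        rw [← integral_indicator hs', Set.inter_indicator_one]
        congr with ω
        by_cases hω : ω ∈ s <;> simp [hω, mul_comm]
    _ = ∫ ω, h ω * (μ⟦B ∩ s | m⟧) ω ∂μ := by
        refine (integral_mul_condExp_of_stronglyMeasurable hm hh ?_ ?_).symm
        · exact ((integrable_const (1 : ℝ)).indicator hBs).bdd_mul
            (hh.mono hm).aestronglyMeasurable hC
        · exact (integrable_const (1 : ℝ)).indicator hBs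
    _ = ∫ ω, ((μ⟦B | m⟧) ω * h ω) * (μ⟦s | m⟧) ω ∂μ := by
        refine integral_congr_ae ?_
        filter_upwards [hfactor] with ω hω
        rw [hω, Pi.mul_apply]
        ring
    _ = ∫ ω, ((μ⟦B | m⟧) ω * h ω) * s.indicator 1 ω ∂μ := by
        refine integral_mul_condExp_of_stronglyMeasurable hm
          (stronglyMeasurable_condExp.mul hh) ?_ ?_
        · exact ((integrable_const (1 : ℝ)).indicator hs').bdd_mul
            ((stronglyMeasurable_condExp.mul hh).mono hm).aestronglyMeasurable
            (ae_norm_mul_le_of_norm_le_one hq hC)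
        · exact (integrable_const (1 : ℝ)).indicator hs'
    _ = ∫ ω in s, (μ⟦B | m⟧) ω * h ω ∂μ := by
        rw [← integral_indicator hs']
        congr with ω
        by_cases hω : ω ∈ s <;> simp [hω, mul_comm]

lemma CondIndep.condExp_indicator_mul (hindep : CondIndep m m₁ n hm μ) (hm₁ : m₁ ≤ mΩ)
    (hn : n ≤ mΩ) (hB : MeasurableSet[m₁] B) (hh : StronglyMeasurable[m] h)
    (hC : ∀ᵐ ω ∂μ, ‖h ω‖ ≤ C) :
    μ[B.indicator 1 * h | n] =ᵐ[μ] μ[μ⟦B | m⟧ * h | n] := by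
  have hqh : Integrable (μ⟦B | m⟧ * h) μ :=
    integrable_condExp.mul_bdd (hh.mono hm).aestronglyMeasurable hC
  refine ae_eq_condExp_of_forall_setIntegral_eq hn hqh
    (fun s _ _ ↦ integrable_condExp.integrableOn) (fun s hs _ ↦ ?_)
    stronglyMeasurable_condExp.aestronglyMeasurable
  have hIh : Integrable (B.indicator 1 * h) μ :=
    ((integrable_const (1 : ℝ)).indicator (hm₁ B hB)).mul_bdd
      (hh.mono hm).aestronglyMeasurable hC
  rw [setIntegral_condExp hn hIh hs]
  exact CondIndep.setIntegral_indicator_mul hindep hm₁ hn hB hs hh hC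

lemma CondIndep.integral_mul_indicator_mul (hindep : CondIndep m m₁ n hm μ) (hm₁ : m₁ ≤ mΩ)
    (hn : n ≤ mΩ) (hB : MeasurableSet[m₁] B) {f : Ω → ℝ} (hf : Integrable f μ)
    (hfn : StronglyMeasurable[n] f) (hh : StronglyMeasurable[m] h)
    (hC : ∀ᵐ ω ∂μ, ‖h ω‖ ≤ C) :
    ∫ ω, f ω * (B.indicator 1 ω * h ω) ∂μ = ∫ ω, f ω * ((μ⟦B | m⟧) ω * h ω) ∂μ := by
  have hhm : AEStronglyMeasurable h μ := (hh.mono hm).aestronglyMeasurable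
  calc ∫ ω, f ω * (B.indicator 1 ω * h ω) ∂μ
      = ∫ ω, f ω * μ[B.indicator 1 * h | n] ω ∂μ :=
        (integral_mul_condExp_of_stronglyMeasurable hn hfn
          (hf.mul_bdd (.mul (aestronglyMeasurable_one.indicator (hm₁ B hB)) hhm)
            (ae_norm_mul_le_of_norm_le_one (ae_of_all _ (norm_indicator_one_le_one B)) hC))
          (((integrable_const (1 : ℝ)).indicator (hm₁ B hB)).mul_bdd hhm hC)).symm
    _ = ∫ ω, f ω * μ[μ⟦B | m⟧ * h | n] ω ∂μ := by
        refine integral_congr_ae ?_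
        filter_upwards [CondIndep.condExp_indicator_mul hindep hm₁ hn hB hh hC] with ω hω
        rw [hω]
    _ = ∫ ω, f ω * ((μ⟦B | m⟧) ω * h ω) ∂μ :=
        integral_mul_condExp_of_stronglyMeasurable hn hfn
          (hf.mul_bdd ((stronglyMeasurable_condExp.mono hm).aestronglyMeasurable.mul hhm)
            (ae_norm_mul_le_of_norm_le_one (ae_norm_condExp_indicator_le_one B) hC))
          (integrable_condExp.mul_bdd hhm hC)

lemma CondIndep.integral_mul_indicator_mul_div (hindep : CondIndep m m₁ n hm μ)
    (hm₁ : m₁ ≤ mΩ) (hn : n ≤ mΩ) (hB : MeasurableSet[m₁] B) {f : Ω → ℝ} (hf : Integrable f μ)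
    (hfn : StronglyMeasurable[n] f) {g p : Ω → ℝ} (hg : StronglyMeasurable[m] g)
    (hgC : ∀ᵐ ω ∂μ, ‖g ω‖ ≤ C) (hp : StronglyMeasurable[m] p) {η : ℝ} (hη : 0 < η)
    (hpη : ∀ᵐ ω ∂μ, η ≤ p ω) (hpB : p =ᵐ[μ] μ⟦B | m⟧) :
    ∫ ω, f ω * (B.indicator 1 ω * (g ω / p ω)) ∂μ = ∫ ω, f ω * g ω ∂μ := by
  have hbound : ∀ᵐ ω ∂μ, ‖g ω / p ω‖ ≤ C / η := by
    filter_upwards [hgC, hpη] with ω hgω hpω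
    exact norm_div_le_div_of_norm_le_of_le hgω hη hpω
  rw [CondIndep.integral_mul_indicator_mul (h := fun ω ↦ g ω / p ω) hindep hm₁ hn hB hf hfn
    (hg.div hp) hbound]
  refine integral_congr_ae ?_
  filter_upwards [hpη, hpB] with ω hpω hpBω
  rw [← hpBω, mul_div_cancel₀ _ (hη.trans_le hpω).ne']

end CondIndep

section InversePropensityWeighting

variable {Ω 𝒳 β : Type*} {mΩ : MeasurableSpace Ω} [MeasurableSpace 𝒳] [MeasurableSpace β]
  {P : Measure Ω} {X : Ω → 𝒳} {A : Ω → ℝ} {W : Ω → β} {f : Ω → ℝ} {e g : 𝒳 → ℝ} {a η C : ℝ}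

lemma indicator_preimage_singleton_one {α M : Type*} [DecidableEq α] [Zero M] [One M]
    (A : Ω → α) (a : α) :
    (A ⁻¹' {a}).indicator 1 = fun ω ↦ if A ω = a then (1 : M) else 0 := by
  ext ω
  by_cases h : A ω = a <;> simp [h]

lemma integrable_mul_ite_mul_div (hX : Measurable X) (hA : Measurable A) (hf : Integrable f P)
    (he : Measurable e) (hη : 0 < η) (heη : ∀ x, η ≤ e x) (hg : Measurable g)
    (hgC : ∀ x, ‖g x‖ ≤ C) :
    Integrable (fun ω ↦ f ω * ((if A ω = a then 1 else 0) * (g (X ω) / e (X ω)))) P := by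
  have hmeas : Measurable fun ω ↦ (if A ω = a then (1 : ℝ) else 0) * (g (X ω) / e (X ω)) :=
    (Measurable.ite (hA (measurableSet_singleton a)) measurable_const measurable_const).mul
      ((hg.comp hX).div (he.comp hX))
  refine hf.mul_bdd hmeas.aestronglyMeasurable (c := C / η) (ae_of_all _ fun ω ↦ ?_)
  rw [norm_mul]
  refine (mul_le_of_le_one_left (norm_nonneg _) ?_).trans
    (norm_div_le_div_of_norm_le_of_le (hgC (X ω)) hη (heη (X ω)))
  split_ifs <;> simp

variable [StandardBorelSpace Ω] [IsFiniteMeasure P]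

theorem integral_mul_ite_mul_div_eq_integral_mul (hX : Measurable X) (hA : Measurable A)
    (hW : Measurable W)
    (hindep : CondIndepFun (MeasurableSpace.comap X inferInstance) hX.comap_le A W P)
    (hf : Integrable f P) (hfW : Measurable[MeasurableSpace.comap W inferInstance] f)
    (he : Measurable e) (hη : 0 < η) (heη : ∀ x, η ≤ e x)
    (heA : (fun ω ↦ e (X ω)) =ᵐ[P]
      P[fun ω ↦ if A ω = a then (1 : ℝ) else 0 | MeasurableSpace.comap X inferInstance])
    (hg : Measurable g) (hgC : ∀ x, ‖g x‖ ≤ C) :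
    ∫ ω, f ω * ((if A ω = a then 1 else 0) * (g (X ω) / e (X ω))) ∂P
      = ∫ ω, f ω * g (X ω) ∂P := by
  have hXm : Measurable[MeasurableSpace.comap X inferInstance] X := comap_measurable X
  have hB : MeasurableSet[MeasurableSpace.comap A inferInstance] (A ⁻¹' {a}) :=
    ⟨{a}, measurableSet_singleton a, rfl⟩
  rw [← indicator_preimage_singleton_one] at heA
  have key := CondIndep.integral_mul_indicator_mul_div
    ((condIndepFun_iff_condIndep _ _ _ _ _).1 hindep) hA.comap_le hW.comap_le hB hf
    hfW.stronglyMeasurable (hg.comp hXm).stronglyMeasurable (ae_of_all _ fun ω ↦ hgC (X ω))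
    (he.comp hXm).stronglyMeasurable hη (ae_of_all _ fun ω ↦ heη (X ω)) heA
  rwa [indicator_preimage_singleton_one] at key

end InversePropensityWeighting

/-- Identification of the value function by inverse propensity weighting
(Equation (1) of the paper). With potential outcomes `T₁, T₋₁`, treatment `A` conditionally
independent of `(T₁, T₋₁)` given `σ(X)`, observed outcome
`T = T₁·1{A=1} + T₋₁·1{A=-1}`, and propensity score `π` with
`π(a, X) = P(A = a | σ(X))`, for every measurable rule `d : 𝒳 → {-1,1}`,
`E[T₁·1{d(X)=1} + T₋₁·1{d(X)=-1}] = E[1{A=d(X)}·T/π(A,X)]`. -/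
theorem stmt_6 {Ω 𝒳 : Type*} [mΩ : MeasurableSpace Ω] [StandardBorelSpace Ω]
    [MeasurableSpace 𝒳]
    (P : Measure Ω) [IsProbabilityMeasure P]
    (X : Ω → 𝒳) (hX : Measurable X)
    (A : Ω → ℝ) (hA : Measurable A) (hAval : ∀ ω, A ω = 1 ∨ A ω = -1)
    (T1 Tm1 : Ω → ℝ) (hT1m : Measurable T1) (hTm1m : Measurable Tm1)
    (hT1int : Integrable T1 P) (hTm1int : Integrable Tm1 P)
    (hindep : CondIndepFun (MeasurableSpace.comap X inferInstance) hX.comap_le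
      A (fun ω => (T1 ω, Tm1 ω)) P)
    (π : ℝ × 𝒳 → ℝ) (hπ : Measurable π) (η : ℝ) (hη : 0 < η)
    (hπb : ∀ a x, η ≤ π (a, x) ∧ π (a, x) ≤ 1)
    (hπver : ∀ a : ℝ, (a = 1 ∨ a = -1) →
      (fun ω => π (a, X ω)) =ᵐ[P]
        P[fun ω => if A ω = a then (1 : ℝ) else 0 |
          MeasurableSpace.comap X inferInstance])
    (T : Ω → ℝ)
    (hTdef : ∀ ω, T ω = T1 ω * (if A ω = 1 then (1 : ℝ) else 0)
      + Tm1 ω * (if A ω = -1 then (1 : ℝ) else 0))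
    (d : 𝒳 → ℝ) (hd : Measurable d) (hdval : ∀ x, d x = 1 ∨ d x = -1) :
    ∫ ω, (T1 ω * (if d (X ω) = 1 then (1 : ℝ) else 0)
        + Tm1 ω * (if d (X ω) = -1 then (1 : ℝ) else 0)) ∂P
      = ∫ ω, (if A ω = d (X ω) then (1 : ℝ) else 0) * T ω / π (A ω, X ω) ∂P := by
  have hW : Measurable fun ω ↦ (T1 ω, Tm1 ω) := hT1m.prodMk hTm1m
  have hT1W : Measurable[MeasurableSpace.comap (fun ω ↦ (T1 ω, Tm1 ω)) inferInstance] T1 :=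
    measurable_fst.comp (comap_measurable _)
  have hTm1W : Measurable[MeasurableSpace.comap (fun ω ↦ (T1 ω, Tm1 ω)) inferInstance] Tm1 :=
    measurable_snd.comp (comap_measurable _)
  have he (a : ℝ) : Measurable fun x ↦ π (a, x) :=
    hπ.comp (measurable_const.prodMk measurable_id)
  have hg (a : ℝ) : Measurable fun x ↦ if d x = a then (1 : ℝ) else 0 :=
    Measurable.ite (hd (measurableSet_singleton a)) measurable_const measurable_const
  have hgC (a : ℝ) (x : 𝒳) : ‖if d x = a then (1 : ℝ) else 0‖ ≤ 1 := by split_ifs <;> simp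
  have hint {f : Ω → ℝ} (hf : Integrable f P) (a : ℝ) :
      Integrable (fun ω ↦ f ω * if d (X ω) = a then (1 : ℝ) else 0) P :=
    hf.mul_bdd ((hg a).comp hX).aestronglyMeasurable (ae_of_all _ fun ω ↦ hgC a (X ω))
  have hint_ipw {f : Ω → ℝ} (hf : Integrable f P) (a : ℝ) :=
    integrable_mul_ite_mul_div (a := a) hX hA hf (he a) hη (fun x ↦ (hπb a x).1) (hg a) (hgC a)
  rw [integral_add (hint hT1int 1) (hint hTm1int (-1)),
    ← integral_mul_ite_mul_div_eq_integral_mul hX hA hW hindep hT1int hT1W (he 1) hη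
      (fun x ↦ (hπb 1 x).1) (hπver 1 (.inl rfl)) (hg 1) (hgC 1),
    ← integral_mul_ite_mul_div_eq_integral_mul hX hA hW hindep hTm1int hTm1W (he (-1)) hη
      (fun x ↦ (hπb (-1) x).1) (hπver (-1) (.inr rfl)) (hg (-1)) (hgC (-1)),
    ← integral_add (hint_ipw hT1int 1) (hint_ipw hTm1int (-1))]
  congr with ω
  have hne : (-1 : ℝ) ≠ 1 := by norm_num
  rcases hAval ω with hAω | hAω <;> rcases hdval (X ω) with hdω | hdω <;>
    simp [hTdef, hAω, hdω, hne, hne.symm] <;> ring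
end

section
/- Let δ > 0 and define the doubled smoothed ramp loss L : ℝ → ℝ by L(u) = 0 for u ≤ −δ, L(u) = (1 + u/δ)² for −δ < u ≤ 0, L(u) = 2 − (1 − u/δ)² for 0 < u < δ, and L(u) = 2 for u ≥ δ; define sign(t) = 1 if t ≥ 0 and sign(t) = −1 if t < 0. Let (Ω, ℱ, P) be a probability space, 𝒳 a measurable space, X : Ω → 𝒳 measurable, A : Ω → {−1, 1} a random variable, Y : Ω → ℝ a random variable with 0 ≤ Y ≤ h almost surely for some h > 0, and Δ : Ω → {0, 1} a random variable. Let π : {−1,1} × 𝒳 → ℝ be measurable with η ≤ π(a, x) ≤ 1 for all (a, x) and some η > 0, such that for each a ∈ {−1, 1}, ω ↦ π(a, X(ω)) is a version of P(A = a ∣ σ(X)). Let S̃ : ℝ × 𝒳 × {−1,1} → ℝ be measurable with η_C ≤ S̃ ≤ 1 for some η_C > 0, and fix γ ∈ (0,1). For measurable f : 𝒳 → ℝ and α ∈ ℝ set V'_L(f, α) = E[(αγ − Δ·(α − Y)·1{Y ≤ α}/S̃(Y, X, A)) · L(A·f(X))/π(A, X)], and for measurable d : 𝒳 → {−1, 1}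 and α ∈ ℝ set V'(d, α) = E[(αγ − Δ·(α − Y)·1{Y ≤ α}/S̃(Y, X, A)) · 1{A = d(X)}/π(A, X)]. If a measurable f̃ : 𝒳 → ℝ and α̃ ∈ ℝ satisfy V'_L(f̃, α̃) ≥ V'_L(f, α) for every measurable f : 𝒳 → ℝ and every α ∈ ℝ, then V'(sign∘f̃, α̃) ≥ V'(d, α) for every measurable d : 𝒳 → {−1, 1} and every α ∈ ℝ. -/
open MeasureTheory

/-!
For a `±1`-valued rule `d`, `L(A · δ d(X)) = 2 · 1{A = d(X)}`, so `2 V'(d, α) = V'_L(δ d, α)`,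
which is at most `V'_L(f̃, α̃)`; it remains to show `V'_L(f̃, α̃) = V'_L(δ · sign ∘ f̃, α̃)`.
Since `A = ±1` and `L(-u) = 2 - L(u)`, at fixed `α̃` we have
`V'_L(f, α̃) = c + E[L(f(X)) ψ(X)]`, where `ψ(X) = E[W A | X]` and `W` is the weight of `L(A f(X))`.
As `0 ≤ L ≤ 2`, the second term is at most `E[ψ(X) + |ψ(X)|]`, with equality for `f = δ · sign ∘ ψ`.
Maximality of `f̃` therefore forces `L(f̃(X)) = 2` where `ψ(X) > 0` and `L(f̃(X)) = 0` where
`ψ(X) < 0` (almost surely), i.e. `f̃(X) ≥ δ`, resp. `≤ -δ`, there; replacing `f̃` by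
`δ · sign ∘ f̃` leaves these values unchanged.
-/

/-- The doubled smoothed ramp loss: `L(u) = 0` for `u ≤ -δ`, `(1+u/δ)²` for `-δ < u ≤ 0`,
`2 - (1-u/δ)²` for `0 < u < δ`, and `2` for `u ≥ δ`. -/
noncomputable def rampL (δ u : ℝ) : ℝ :=
  if u ≤ -δ then 0
  else if u ≤ 0 then (1 + u / δ) ^ 2
  else if u < δ then 2 - (1 - u / δ) ^ 2
  else 2

/-- `sgn t = 1` if `t ≥ 0` and `-1` if `t < 0`. -/
noncomputable def sgn (t : ℝ) : ℝ := if 0 ≤ t then 1 else -1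

/-- Surrogate CVaR-criterion value
`V'_L(f, α) = E[(αγ - Δ(α-Y)1{Y≤α}/S̃(Y,X,A)) · L(A f(X)) / π(A,X)]`. -/
noncomputable def VLcvar {Ω 𝒳 : Type*} [MeasurableSpace Ω] [MeasurableSpace 𝒳]
    (P : Measure Ω) (X : Ω → 𝒳) (A Y Δc : Ω → ℝ) (S : ℝ × 𝒳 × ℝ → ℝ) (π : ℝ × 𝒳 → ℝ)
    (γ δ : ℝ) (f : 𝒳 → ℝ) (α : ℝ) : ℝ :=
  ∫ ω, (α * γ - Δc ω * (α - Y ω) * (if Y ω ≤ α then (1 : ℝ) else 0) / S (Y ω, X ω, A ω))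
      * rampL δ (A ω * f (X ω)) / π (A ω, X ω) ∂P

/-- CVaR-criterion value
`V'(d, α) = E[(αγ - Δ(α-Y)1{Y≤α}/S̃(Y,X,A)) · 1{A = d(X)} / π(A,X)]`. -/
noncomputable def Vcvar {Ω 𝒳 : Type*} [MeasurableSpace Ω] [MeasurableSpace 𝒳]
    (P : Measure Ω) (X : Ω → 𝒳) (A Y Δc : Ω → ℝ) (S : ℝ × 𝒳 × ℝ → ℝ) (π : ℝ × 𝒳 → ℝ)
    (γ : ℝ) (d : 𝒳 → ℝ) (α : ℝ) : ℝ :=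
  ∫ ω, (α * γ - Δc ω * (α - Y ω) * (if Y ω ≤ α then (1 : ℝ) else 0) / S (Y ω, X ω, A ω))
      * (if A ω = d (X ω) then (1 : ℝ) else 0) / π (A ω, X ω) ∂P

section RampLoss

variable {δ : ℝ}

lemma rampL_of_le_neg {u : ℝ} (hu : u ≤ -δ) : rampL δ u = 0 := if_pos hu

lemma rampL_of_le {u : ℝ} (hδ : 0 < δ) (hu : δ ≤ u) : rampL δ u = 2 := by
  unfold rampL; split_ifs <;> linarith

lemma rampL_neg (hδ : 0 < δ) (u : ℝ) : rampL δ (-u) = 2 - rampL δ u := by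
  rcases eq_or_ne u 0 with rfl | hu
  · rw [neg_zero]; unfold rampL; split_ifs <;> first | (exfalso; linarith) | norm_num
  · unfold rampL
    split_ifs <;> first | (exfalso; linarith) | (exfalso; exact hu (by linarith)) | ring

lemma rampL_nonneg (hδ : 0 < δ) (u : ℝ) : 0 ≤ rampL δ u := by
  unfold rampL
  split_ifs with h₁ h₂ h₃
  · rfl
  · positivity
  · have : u / δ < 1 := (div_lt_one hδ).2 h₃
    have : 0 < u / δ := div_pos (by linarith) hδ
    nlinarith
  · norm_num

lemma rampL_le_two (hδ : 0 < δ) (u : ℝ) : rampL δ u ≤ 2 := by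
  linarith [rampL_neg hδ u, rampL_nonneg hδ (-u)]

lemma rampL_eq_two_iff {u : ℝ} (hδ : 0 < δ) : rampL δ u = 2 ↔ δ ≤ u := by
  refine ⟨fun h => ?_, rampL_of_le hδ⟩
  by_contra hu
  unfold rampL at h
  split_ifs at h with h₁ h₂ h₃
  · norm_num at h
  · have : -1 < u / δ := by rw [lt_div_iff₀ hδ]; linarith
    have : u / δ ≤ 0 := div_nonpos_of_nonpos_of_nonneg h₂ hδ.le
    nlinarith
  · have : u / δ < 1 := (div_lt_one hδ).2 h₃
    nlinarith
  · exact hu (not_lt.1 h₃)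

lemma rampL_eq_zero_iff {u : ℝ} (hδ : 0 < δ) : rampL δ u = 0 ↔ u ≤ -δ := by
  rw [← neg_neg u, rampL_neg hδ, sub_eq_zero, eq_comm, rampL_eq_two_iff hδ, neg_le_neg_iff]

lemma measurable_rampL (δ : ℝ) : Measurable (rampL δ) := by
  unfold rampL
  refine Measurable.ite measurableSet_Iic measurable_const
    (Measurable.ite measurableSet_Iic (by fun_prop)
      (Measurable.ite measurableSet_Iio (by fun_prop) measurable_const))

lemma abs_rampL_le_two (hδ : 0 < δ) (u : ℝ) : |rampL δ u| ≤ 2 := by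
  rw [abs_of_nonneg (rampL_nonneg hδ u)]; exact rampL_le_two hδ u

lemma measurable_sgn : Measurable sgn :=
  Measurable.ite measurableSet_Ici measurable_const measurable_const

lemma sgn_eq_one_or_eq_neg_one (t : ℝ) : sgn t = 1 ∨ sgn t = -1 := by
  unfold sgn; split_ifs <;> simp

lemma rampL_mul_sgn (hδ : 0 < δ) (u : ℝ) : rampL δ (δ * sgn u) = if 0 ≤ u then 2 else 0 := by
  unfold sgn
  split_ifs
  · rw [mul_one, rampL_of_le hδ le_rfl]
  · rw [mul_neg_one, rampL_of_le_neg le_rfl]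

lemma rampL_mul_le_add_abs (hδ : 0 < δ) (u c : ℝ) : rampL δ u * c ≤ c + |c| := by
  rcases le_total 0 c with hc | hc
  · rw [abs_of_nonneg hc]; nlinarith [rampL_le_two hδ u]
  · rw [abs_of_nonpos hc]; nlinarith [rampL_nonneg hδ u]

lemma rampL_mul_sgn_mul (hδ : 0 < δ) (c : ℝ) : rampL δ (δ * sgn c) * c = c + |c| := by
  rw [rampL_mul_sgn hδ]
  split_ifs with hc
  · rw [abs_of_nonneg hc]; ring
  · rw [abs_of_neg (not_le.1 hc)]; ring

lemma rampL_mul_sgn_mul_of_eq {u : ℝ} (hδ : 0 < δ) {c : ℝ} (h : rampL δ u * c = c + |c|) :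
    rampL δ (δ * sgn u) * c = c + |c| := by
  rcases lt_trichotomy c 0 with hc | rfl | hc
  · have : rampL δ u = 0 := by rw [abs_of_neg hc] at h; nlinarith
    rw [rampL_mul_sgn hδ, if_neg (by linarith [(rampL_eq_zero_iff hδ).1 this]), abs_of_neg hc]
    ring
  · simp
  · have : rampL δ u = 2 := by rw [abs_of_pos hc] at h; nlinarith
    rw [rampL_mul_sgn hδ, if_pos (by linarith [(rampL_eq_two_iff hδ).1 this]), abs_of_pos hc]
    ring

lemma abs_le_one_of_pm_one {a : ℝ} (ha : a = 1 ∨ a = -1) : |a| ≤ 1 := by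
  rcases ha with rfl | rfl <;> simp

lemma rampL_pm_one_mul {a : ℝ} (hδ : 0 < δ) (ha : a = 1 ∨ a = -1) (u : ℝ) :
    rampL δ (a * u) = 1 - a + a * rampL δ u := by
  rcases ha with rfl | rfl
  · rw [one_mul]; ring
  · rw [neg_one_mul, rampL_neg hδ]; ring

lemma rampL_pm_one_mul_mul {a b : ℝ} (hδ : 0 < δ) (ha : a = 1 ∨ a = -1) (hb : b = 1 ∨ b = -1) :
    rampL δ (a * (δ * b)) = 2 * if a = b then 1 else 0 := by
  have h₂ := rampL_of_le hδ (le_refl δ)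
  have h₀ := rampL_of_le_neg (le_refl (-δ))
  rcases ha with rfl | rfl <;> rcases hb with rfl | rfl <;> norm_num [h₂, h₀]

end RampLoss

section Conditioning

variable {Ω 𝒳 : Type*} [mΩ : MeasurableSpace Ω] [m𝒳 : MeasurableSpace 𝒳] {μ : Measure Ω}
  {X : Ω → 𝒳}

lemma integral_comp_mul_condExp_comap [IsFiniteMeasure μ] (hX : Measurable X) {g : 𝒳 → ℝ}
    (hg : Measurable g) {C : ℝ} (hgC : ∀ x, |g x| ≤ C) {G : Ω → ℝ} (hG : Integrable G μ) :
    ∫ ω, g (X ω) * G ω ∂μ = ∫ ω, g (X ω) * μ[G | m𝒳.comap X] ω ∂μ := by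
  have hm : m𝒳.comap X ≤ mΩ := hX.comap_le
  have hgX : StronglyMeasurable[m𝒳.comap X] (g ∘ X) :=
    (hg.comp (Measurable.of_comap_le le_rfl)).stronglyMeasurable
  calc ∫ ω, g (X ω) * G ω ∂μ = ∫ ω, μ[(g ∘ X) * G | m𝒳.comap X] ω ∂μ :=
        (integral_condExp hm).symm
    _ = ∫ ω, g (X ω) * μ[G | m𝒳.comap X] ω ∂μ :=
        integral_congr_ae (condExp_stronglyMeasurable_mul_of_bound hm hgX hG C
          (.of_forall fun ω => hgC (X ω)))

lemma exists_measurable_integral_comp_mul_eq [IsFiniteMeasure μ] (hX : Measurable X)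
    {G : Ω → ℝ} (hG : Integrable G μ) :
    ∃ ψ : 𝒳 → ℝ, Measurable ψ ∧ Integrable (ψ ∘ X) μ ∧
      ∀ g : 𝒳 → ℝ, Measurable g → ∀ C, (∀ x, |g x| ≤ C) →
        ∫ ω, g (X ω) * G ω ∂μ = ∫ ω, g (X ω) * ψ (X ω) ∂μ := by
  rcases isEmpty_or_nonempty 𝒳 with h𝒳 | h𝒳
  · have : IsEmpty Ω := X.isEmpty
    exact ⟨0, measurable_const, integrable_zero _ _ _, fun _ _ _ _ => by simp [integral_of_isEmpty]⟩
  obtain ⟨ψ, hψ, hφ⟩ := (stronglyMeasurable_condExp (m := m𝒳.comap X) (μ := μ)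
    (f := G)).measurable.exists_eq_measurable_comp
  refine ⟨ψ, hψ, hφ ▸ integrable_condExp, fun g hg C hgC => ?_⟩
  rw [integral_comp_mul_condExp_comap hX hg hgC hG, hφ]
  rfl

variable {δ : ℝ}

theorem integral_rampL_mul_sgn_comp_mul_eq (hδ : 0 < δ) (hX : Measurable X) {ψ : 𝒳 → ℝ}
    (hψ : Measurable ψ) (hψX : Integrable (ψ ∘ X) μ) {f₀ : 𝒳 → ℝ} (hf₀ : Measurable f₀)
    (hmax : ∀ f : 𝒳 → ℝ, Measurable f →
      ∫ ω, rampL δ (f (X ω)) * ψ (X ω) ∂μ ≤ ∫ ω, rampL δ (f₀ (X ω)) * ψ (X ω) ∂μ) :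
    ∫ ω, rampL δ (δ * sgn (f₀ (X ω))) * ψ (X ω) ∂μ = ∫ ω, rampL δ (f₀ (X ω)) * ψ (X ω) ∂μ := by
  have hint : ∀ f : 𝒳 → ℝ, Measurable f →
      Integrable (fun ω => rampL δ (f (X ω)) * ψ (X ω)) μ := fun f hf =>
    hψX.bdd_mul ((measurable_rampL δ).comp (hf.comp hX)).aestronglyMeasurable
      (.of_forall fun ω => abs_rampL_le_two hδ _)
  have hbound : Integrable (fun ω => ψ (X ω) + |ψ (X ω)|) μ := hψX.add hψX.abs
  -- the maximal value is attained by `δ * sgn ∘ ψ`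
  have hattained : ∫ ω, (ψ (X ω) + |ψ (X ω)|) ∂μ ≤ ∫ ω, rampL δ (f₀ (X ω)) * ψ (X ω) ∂μ := by
    have := hmax (fun x => δ * sgn (ψ x)) (measurable_const.mul (measurable_sgn.comp hψ))
    simpa only [Function.comp_apply, rampL_mul_sgn_mul hδ] using this
  have hae : (fun ω => rampL δ (f₀ (X ω)) * ψ (X ω)) =ᵐ[μ] fun ω => ψ (X ω) + |ψ (X ω)| :=
    (integral_eq_iff_of_ae_le (hint f₀ hf₀) hbound
      (.of_forall fun ω => rampL_mul_le_add_abs hδ _ _)).1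
      (le_antisymm (integral_mono (hint f₀ hf₀) hbound fun ω => rampL_mul_le_add_abs hδ _ _)
        hattained)
  rw [integral_congr_ae hae]
  exact integral_congr_ae (hae.mono fun ω hω => rampL_mul_sgn_mul_of_eq hδ hω)

end Conditioning

section CVaR

variable {Ω 𝒳 : Type*} [MeasurableSpace Ω] [MeasurableSpace 𝒳] {P : Measure Ω} {X : Ω → 𝒳}
  {A Y Δc : Ω → ℝ} {S : ℝ × 𝒳 × ℝ → ℝ} {π : ℝ × 𝒳 → ℝ} {γ δ α : ℝ}

/-- The factor multiplying `L(A f(X))` in `V'_L(f, α)`. -/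
noncomputable def cvarWeight (X : Ω → 𝒳) (A Y Δc : Ω → ℝ) (S : ℝ × 𝒳 × ℝ → ℝ)
    (π : ℝ × 𝒳 → ℝ) (γ α : ℝ) (ω : Ω) : ℝ :=
  (α * γ - Δc ω * (α - Y ω) * (if Y ω ≤ α then (1 : ℝ) else 0) / S (Y ω, X ω, A ω))
    / π (A ω, X ω)

lemma VLcvar_eq_integral_cvarWeight_mul (f : 𝒳 → ℝ) :
    VLcvar P X A Y Δc S π γ δ f α
      = ∫ ω, cvarWeight X A Y Δc S π γ α ω * rampL δ (A ω * f (X ω)) ∂P := by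
  unfold VLcvar cvarWeight
  simp only [div_mul_eq_mul_div]

lemma two_mul_Vcvar (hδ : 0 < δ) (hAval : ∀ ω, A ω = 1 ∨ A ω = -1) {d : 𝒳 → ℝ}
    (hd : ∀ x, d x = 1 ∨ d x = -1) :
    2 * Vcvar P X A Y Δc S π γ d α = VLcvar P X A Y Δc S π γ δ (fun x => δ * d x) α := by
  unfold Vcvar VLcvar
  rw [← integral_const_mul]
  congr 1 with ω
  rw [rampL_pm_one_mul_mul hδ (hAval ω) (hd (X ω))]
  ring

lemma abs_mul_sub_mul_ite_le {c α y : ℝ} (hc : c = 0 ∨ c = 1) (hy : 0 ≤ y) :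
    |c * (α - y) * (if y ≤ α then (1 : ℝ) else 0)| ≤ |α| := by
  split_ifs with hyα
  · rcases hc with rfl | rfl
    · simp
    · rw [one_mul, mul_one, abs_of_nonneg (sub_nonneg.2 hyα)]
      linarith [le_abs_self α]
  · simp

lemma integrable_cvarWeight [IsFiniteMeasure P] (hX : Measurable X) (hA : Measurable A)
    (hY : Measurable Y) (hΔc : Measurable Δc) (hS : Measurable S) (hπ : Measurable π)
    (hY₀ : ∀ᵐ ω ∂P, 0 ≤ Y ω) (hΔval : ∀ ω, Δc ω = 0 ∨ Δc ω = 1)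
    {ηC η : ℝ} (hηC : 0 < ηC) (hSb : ∀ t x a, ηC ≤ S (t, x, a)) (hη : 0 < η)
    (hπb : ∀ a x, η ≤ π (a, x)) :
    Integrable (cvarWeight X A Y Δc S π γ α) P := by
  have hind : Measurable fun ω => if Y ω ≤ α then (1 : ℝ) else 0 :=
    Measurable.ite (measurableSet_le hY measurable_const) measurable_const measurable_const
  have hmeas : Measurable (cvarWeight X A Y Δc S π γ α) :=
    (measurable_const.sub (((hΔc.mul (measurable_const.sub hY)).mul hind).div
      (hS.comp (hY.prodMk (hX.prodMk hA))))).div (hπ.comp (hA.prodMk hX))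
  refine .of_bound hmeas.aestronglyMeasurable ((|α * γ| + |α| / ηC) / η) ?_
  filter_upwards [hY₀] with ω hYω
  have hnum : |α * γ - Δc ω * (α - Y ω) * (if Y ω ≤ α then (1 : ℝ) else 0) / S (Y ω, X ω, A ω)|
      ≤ |α * γ| + |α| / ηC := by
    refine (abs_sub _ _).trans (add_le_add_right ?_ _)
    rw [abs_div, abs_of_pos (hηC.trans_le (hSb _ _ _))]
    exact div_le_div₀ (abs_nonneg α) (abs_mul_sub_mul_ite_le (hΔval ω) hYω) hηC (hSb _ _ _)
  rw [Real.norm_eq_abs, cvarWeight, abs_div, abs_of_pos (hη.trans_le (hπb _ _))]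
  exact div_le_div₀ (by positivity) hnum hη (hπb _ _)

lemma VLcvar_eq_add_integral (hδ : 0 < δ) (hX : Measurable X) (hA : Measurable A)
    (hAval : ∀ ω, A ω = 1 ∨ A ω = -1) (hW : Integrable (cvarWeight X A Y Δc S π γ α) P)
    {f : 𝒳 → ℝ} (hf : Measurable f) :
    VLcvar P X A Y Δc S π γ δ f α
      = ∫ ω, cvarWeight X A Y Δc S π γ α ω * (1 - A ω) ∂P
        + ∫ ω, rampL δ (f (X ω)) * (cvarWeight X A Y Δc S π γ α ω * A ω) ∂P := by
  set W := cvarWeight X A Y Δc S π γ α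
  have hW₁ : Integrable (fun ω => W ω * (1 - A ω)) P :=
    hW.mul_bdd (measurable_const.sub hA).aestronglyMeasurable (c := 2) (.of_forall fun ω => by
      rw [Real.norm_eq_abs]; rcases hAval ω with h | h <;> norm_num [h])
  have hW₂ : Integrable (fun ω => rampL δ (f (X ω)) * (W ω * A ω)) P :=
    (hW.mul_bdd hA.aestronglyMeasurable (c := 1) (.of_forall fun ω =>
      abs_le_one_of_pm_one (hAval ω))).bdd_mul
      ((measurable_rampL δ).comp (hf.comp hX)).aestronglyMeasurable
      (.of_forall fun ω => abs_rampL_le_two hδ _)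
  rw [VLcvar_eq_integral_cvarWeight_mul, ← integral_add hW₁ hW₂]
  congr 1 with ω
  rw [rampL_pm_one_mul hδ (hAval ω)]
  ring

theorem VLcvar_mul_sgn_eq_of_forall_le [IsFiniteMeasure P] (hδ : 0 < δ) (hX : Measurable X)
    (hA : Measurable A) (hAval : ∀ ω, A ω = 1 ∨ A ω = -1)
    (hW : Integrable (cvarWeight X A Y Δc S π γ α) P) {f₀ : 𝒳 → ℝ} (hf₀ : Measurable f₀)
    (hmax : ∀ f : 𝒳 → ℝ, Measurable f →
      VLcvar P X A Y Δc S π γ δ f α ≤ VLcvar P X A Y Δc S π γ δ f₀ α) :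
    VLcvar P X A Y Δc S π γ δ (fun x => δ * sgn (f₀ x)) α = VLcvar P X A Y Δc S π γ δ f₀ α := by
  have hWA : Integrable (fun ω => cvarWeight X A Y Δc S π γ α ω * A ω) P :=
    hW.mul_bdd hA.aestronglyMeasurable (c := 1) (.of_forall fun ω =>
      abs_le_one_of_pm_one (hAval ω))
  obtain ⟨ψ, hψ, hψX, hpull⟩ := exists_measurable_integral_comp_mul_eq hX hWA
  have hsplit : ∀ f : 𝒳 → ℝ, Measurable f → VLcvar P X A Y Δc S π γ δ f α
      = ∫ ω, cvarWeight X A Y Δc S π γ α ω * (1 - A ω) ∂P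
        + ∫ ω, rampL δ (f (X ω)) * ψ (X ω) ∂P := fun f hf => by
    rw [VLcvar_eq_add_integral hδ hX hA hAval hW hf,
      hpull (fun x => rampL δ (f x)) ((measurable_rampL δ).comp hf) 2
        fun x => abs_rampL_le_two hδ _]
  rw [hsplit f₀ hf₀,
    hsplit (fun x => δ * sgn (f₀ x)) (measurable_const.mul (measurable_sgn.comp hf₀)),
    integral_rampL_mul_sgn_comp_mul_eq hδ hX hψ hψX hf₀ fun f hf => by
      simpa only [hsplit f hf, hsplit f₀ hf₀, add_le_add_iff_left] using hmax f hf]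

end CVaR

theorem stmt_7_general {Ω 𝒳 : Type*} [MeasurableSpace Ω] [MeasurableSpace 𝒳]
    (P : Measure Ω) [IsProbabilityMeasure P]
    (X : Ω → 𝒳) (hX : Measurable X)
    (A : Ω → ℝ) (hA : Measurable A) (hAval : ∀ ω, A ω = 1 ∨ A ω = -1)
    (Y : Ω → ℝ) (hY : Measurable Y)
    (h : ℝ) (hYb : ∀ᵐ ω ∂P, 0 ≤ Y ω ∧ Y ω ≤ h)
    (Δc : Ω → ℝ) (hΔm : Measurable Δc) (hΔval : ∀ ω, Δc ω = 0 ∨ Δc ω = 1)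
    (π : ℝ × 𝒳 → ℝ) (hπ : Measurable π) (η : ℝ) (hη : 0 < η)
    (hπb : ∀ a x, η ≤ π (a, x) ∧ π (a, x) ≤ 1)
    (S : ℝ × 𝒳 × ℝ → ℝ) (hS : Measurable S) (ηC : ℝ) (hηC : 0 < ηC)
    (hSb : ∀ t x a, ηC ≤ S (t, x, a) ∧ S (t, x, a) ≤ 1)
    (γ : ℝ)
    (δ : ℝ) (hδ : 0 < δ)
    (ftilde : 𝒳 → ℝ) (hftilde : Measurable ftilde) (αtilde : ℝ)
    (hopt : ∀ f : 𝒳 → ℝ, Measurable f → ∀ α : ℝ,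
      VLcvar P X A Y Δc S π γ δ f α ≤ VLcvar P X A Y Δc S π γ δ ftilde αtilde) :
    ∀ d : 𝒳 → ℝ, Measurable d → (∀ x, d x = 1 ∨ d x = -1) → ∀ α : ℝ,
      Vcvar P X A Y Δc S π γ d α
        ≤ Vcvar P X A Y Δc S π γ (fun x => sgn (ftilde x)) αtilde := by
  intro d hd hdval α
  have hW : Integrable (cvarWeight X A Y Δc S π γ αtilde) P :=
    integrable_cvarWeight hX hA hY hΔm hS hπ (hYb.mono fun _ => And.left) hΔval hηC
      (fun t x a => (hSb t x a).1) hη (fun a x => (hπb a x).1)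
  calc Vcvar P X A Y Δc S π γ d α = VLcvar P X A Y Δc S π γ δ (fun x => δ * d x) α / 2 := by
        rw [← two_mul_Vcvar hδ hAval hdval]; ring
    _ ≤ VLcvar P X A Y Δc S π γ δ ftilde αtilde / 2 := by
        gcongr; exact hopt (fun x => δ * d x) (measurable_const.mul hd) α
    _ = VLcvar P X A Y Δc S π γ δ (fun x => δ * sgn (ftilde x)) αtilde / 2 := by
        rw [VLcvar_mul_sgn_eq_of_forall_le hδ hX hA hAval hW hftilde fun f hf => hopt f hf αtilde]
    _ = Vcvar P X A Y Δc S π γ (fun x => sgn (ftilde x)) αtilde := by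
        rw [← two_mul_Vcvar hδ hAval fun x => sgn_eq_one_or_eq_neg_one (ftilde x)]; ring

/-- Theorem 1 of the paper: Fisher consistency of the surrogate loss for the
CVaR criterion. If `(f̃, α̃)` maximizes the surrogate value `V'_L` over measurable `f` and
`α ∈ ℝ`, then `(sign ∘ f̃, α̃)` maximizes `V'` over measurable rules `d : 𝒳 → {-1,1}` and
`α ∈ ℝ`. -/
theorem stmt_7 {Ω 𝒳 : Type*} [MeasurableSpace Ω] [MeasurableSpace 𝒳]
    (P : Measure Ω) [IsProbabilityMeasure P]
    (X : Ω → 𝒳) (hX : Measurable X)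
    (A : Ω → ℝ) (hA : Measurable A) (hAval : ∀ ω, A ω = 1 ∨ A ω = -1)
    (Y : Ω → ℝ) (hY : Measurable Y)
    (h : ℝ) (hh : 0 < h) (hYb : ∀ᵐ ω ∂P, 0 ≤ Y ω ∧ Y ω ≤ h)
    (Δc : Ω → ℝ) (hΔm : Measurable Δc) (hΔval : ∀ ω, Δc ω = 0 ∨ Δc ω = 1)
    (π : ℝ × 𝒳 → ℝ) (hπ : Measurable π) (η : ℝ) (hη : 0 < η)
    (hπb : ∀ a x, η ≤ π (a, x) ∧ π (a, x) ≤ 1)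
    (hπver : ∀ a : ℝ, (a = 1 ∨ a = -1) →
      (fun ω => π (a, X ω)) =ᵐ[P]
        P[fun ω => if A ω = a then (1 : ℝ) else 0 |
          MeasurableSpace.comap X inferInstance])
    (S : ℝ × 𝒳 × ℝ → ℝ) (hS : Measurable S) (ηC : ℝ) (hηC : 0 < ηC)
    (hSb : ∀ t x a, ηC ≤ S (t, x, a) ∧ S (t, x, a) ≤ 1)
    (γ : ℝ) (hγ : γ ∈ Set.Ioo (0 : ℝ) 1)
    (δ : ℝ) (hδ : 0 < δ)
    (ftilde : 𝒳 → ℝ) (hftilde : Measurable ftilde) (αtilde : ℝ)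
    (hopt : ∀ f : 𝒳 → ℝ, Measurable f → ∀ α : ℝ,
      VLcvar P X A Y Δc S π γ δ f α ≤ VLcvar P X A Y Δc S π γ δ ftilde αtilde) :
    ∀ d : 𝒳 → ℝ, Measurable d → (∀ x, d x = 1 ∨ d x = -1) → ∀ α : ℝ,
      Vcvar P X A Y Δc S π γ d α
        ≤ Vcvar P X A Y Δc S π γ (fun x => sgn (ftilde x)) αtilde :=
  stmt_7_general P X hX A hA hAval Y hY h hYb Δc hΔm hΔval π hπ η hη hπb S hS ηC hηC hSb γ δ hδ
    ftilde hftilde αtilde hopt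
end
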